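/- arXiv:1410.7902 — 11 statements merged into one kernel-verified Lean document; each statement's English description precedes it below -/
import Mathlib

section
/- Let X and Y be Hausdorff topological spaces, both path-connected, with Y simply connected, and let f : X → Y be a local homeomorphism. Then f is a homeomorphism of X onto Y if and only if f is a proper map. -/
/-!
Over a compact `K ⊆ Y`, a proper local homeomorphism restricts to a local homeomorphism between
compact Hausdorff spaces `f ⁻¹' K → K`, i.e. to a covering map (working over compact sets avoids
needing `f` to be closed, which can fail when `Y` is not compactly generated); hence every path in
`Y` lifts to `X`. Lifting a path from a point of the image gives surjectivity. For injectivity, a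
path from `x₀` to `x₁` with `f x₀ = f x₁` maps to a loop, which is null-homotopic as `Y` is simply
connected; by the monodromy theorem the lifts from `x₀` of the paths of this homotopy all have the
same endpoint, so `x₁` equals the endpoint `x₀` of the lift of the constant loop. A bijective local
homeomorphism is a homeomorphism.
-/

/-- A continuous map is proper if the inverse image of every compact set is compact. -/
def IsProperCompactPreimage {X Y : Type*} [TopologicalSpace X] [TopologicalSpace Y]
    (f : X → Y) : Prop :=
  Continuous f ∧ ∀ K : Set Y, IsCompact K → IsCompact (f ⁻¹' K)

open Function unitInterval

def HasPathLifting {X Y : Type*} [TopologicalSpace X] [TopologicalSpace Y] (f : X → Y) : Prop :=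
  ∀ (γ : C(I, Y)) (x : X), γ 0 = f x → ∃ Γ : C(I, X), f ∘ Γ = γ ∧ Γ 0 = x

section

variable {X Y : Type*} [TopologicalSpace X] {f : X → Y}

theorem IsLocallyInjective.restrictPreimage (hi : IsLocallyInjective f) (s : Set Y) :
    IsLocallyInjective (s.restrictPreimage f) := fun x ↦
  let ⟨U, hU, hxU, hinj⟩ := hi x
  ⟨Subtype.val ⁻¹' U, hU.preimage continuous_subtype_val, hxU,
    fun _ ha _ hb hab ↦ Subtype.ext (hinj ha hb (congrArg Subtype.val hab))⟩

variable [TopologicalSpace Y]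

theorem IsLocalHomeomorph.of_isOpenMap_of_isLocallyInjective (hc : Continuous f)
    (ho : IsOpenMap f) (hi : IsLocallyInjective f) : IsLocalHomeomorph f :=
  isLocalHomeomorph_iff_isOpenEmbedding_restrict.mpr fun x ↦
    let ⟨U, hU, hxU, hinj⟩ := hi x
    ⟨U, hU.mem_nhds hxU, .of_continuous_injective_isOpenMap (hc.comp continuous_subtype_val)
      hinj.injective (ho.domRestrict hU)⟩

theorem IsLocalHomeomorph.restrictPreimage (hf : IsLocalHomeomorph f) (s : Set Y) :
    IsLocalHomeomorph (s.restrictPreimage f) :=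
  .of_isOpenMap_of_isLocallyInjective hf.continuous.restrictPreimage
    (hf.isOpenMap.restrictPreimage s) (hf.isLocallyInjective.restrictPreimage s)

theorem IsLocalHomeomorph.isCoveringMap_restrictPreimage [T2Space X] [T2Space Y]
    (hf : IsLocalHomeomorph f) {K : Set Y} (hK : IsCompact (f ⁻¹' K)) :
    IsCoveringMap (K.restrictPreimage f) :=
  have := isCompact_iff_compactSpace.mp hK
  isLocalHomeomorph_iff_isCoveringMap.mp (hf.restrictPreimage K)

theorem IsLocalHomeomorph.hasPathLifting_of_isCompact_preimage [T2Space X] [T2Space Y]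
    (hf : IsLocalHomeomorph f) (hprop : ∀ K : Set Y, IsCompact K → IsCompact (f ⁻¹' K)) :
    HasPathLifting f := by
  intro γ x hx
  let K := Set.range γ
  have cov := hf.isCoveringMap_restrictPreimage (hprop K (isCompact_range γ.continuous))
  let γK : C(I, K) := ⟨Set.rangeFactorization γ, γ.continuous.rangeFactorization⟩
  obtain ⟨Γ, hΓ, hΓ0⟩ := cov.exists_path_lifts γK ⟨x, 0, hx⟩ (Subtype.ext hx)
  exact ⟨(ContinuousMap.mk Subtype.val continuous_subtype_val).comp Γ,
    funext fun t ↦ congrArg Subtype.val (congrFun hΓ t), congrArg Subtype.val hΓ0⟩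

theorem HasPathLifting.surjective [Nonempty X] [PathConnectedSpace Y] (lift : HasPathLifting f) :
    Surjective f := by
  intro y
  obtain ⟨x⟩ := ‹Nonempty X›
  let γ := PathConnectedSpace.somePath (f x) y
  obtain ⟨Γ, hΓ, -⟩ := lift γ x γ.source
  exact ⟨Γ 1, congrFun hΓ 1 |>.trans γ.target⟩

theorem HasPathLifting.injective [PathConnectedSpace X] [SimplyConnectedSpace Y]
    (lift : HasPathLifting f) (hf : IsLocalHomeomorph f) (sep : IsSeparatedMap f) :
    Injective f := by
  intro x₀ x₁ h
  let q := PathConnectedSpace.somePath x₀ x₁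
  let loop : Path (f x₀) (f x₀) := (q.map hf.continuous).cast rfl h
  obtain ⟨F⟩ := SimplyConnectedSpace.paths_homotopic loop (Path.refl _)
  have hF0 (t : I) : F.curry t 0 = f x₀ := (F.eq_fst t (.inl rfl)).trans loop.source
  choose Γ hΓ hΓ0 using fun t ↦ lift (F.curry t) x₀ (hF0 t)
  have hΓF (t s : I) : f (Γ t s) = F (t, s) := congrFun (hΓ t) s
  have hΓq : Γ 0 = q := by
    refine DFunLike.ext' <| sep.eq_of_comp_eq hf.isLocallyInjective (Γ 0).continuous
      q.continuous ?_ 0 ((hΓ0 0).trans q.source.symm)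
    funext s
    exact (hΓF 0 s).trans (F.apply_zero s)
  have hΓ1 : Γ 1 1 = x₀ := by
    rw [sep.const_of_comp hf.isLocallyInjective (Γ 1).continuous ?_ 1 0, hΓ0]
    intro s s'
    rw [hΓF, hΓF, F.apply_one, F.apply_one]
    rfl
  calc x₀ = Γ 1 1 := hΓ1.symm
    _ = Γ 0 1 := hf.monodromy_theorem sep F Γ hΓF (fun t ↦ (hΓ0 t).trans (hΓ0 0).symm) 1
    _ = x₁ := by rw [hΓq]; exact q.target

end

theorem hadamard_caccioppoli_general {X Y : Type*} [TopologicalSpace X] [TopologicalSpace Y]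
    [T2Space X] [T2Space Y] [PathConnectedSpace X]
    [SimplyConnectedSpace Y] (f : X → Y) (hf : IsLocalHomeomorph f) :
    IsHomeomorph f ↔ IsProperCompactPreimage f := by
  refine ⟨fun h ↦ ⟨h.continuous, fun K hK ↦ h.isProperMap.isCompact_preimage hK⟩, ?_⟩
  rintro ⟨-, hprop⟩
  have lift := hf.hasPathLifting_of_isCompact_preimage hprop
  have hinj := lift.injective hf (T2Space.isSeparatedMap f)
  exact isHomeomorph_iff_isEmbedding_surjective.mpr
    ⟨(hf.isOpenEmbedding_of_injective hinj).isEmbedding, lift.surjective⟩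

/-- Hadamard–Caccioppoli theorem: a local homeomorphism between path-connected
Hausdorff spaces, with simply connected codomain, is a homeomorphism onto `Y`
if and only if it is a proper map. -/
theorem hadamard_caccioppoli {X Y : Type*} [TopologicalSpace X] [TopologicalSpace Y]
    [T2Space X] [T2Space Y] [PathConnectedSpace X] [PathConnectedSpace Y]
    [SimplyConnectedSpace Y] (f : X → Y) (hf : IsLocalHomeomorph f) :
    IsHomeomorph f ↔ IsProperCompactPreimage f :=
  hadamard_caccioppoli_general f hf
end

section
/- Let f : X → Y be a local homeomorphism between Hausdorff topological spaces which has the path-lifting property. Then f lifts homotopies: for every topological space Z, every continuous map H : Z × [0,1] → Y, and every continuous map H̃₀ : Z → X with f(H̃₀(z)) = H(z,0) for all z ∈ Z, there exists a continuous map H̃ : Z × [0,1] → X such that f ∘ H̃ = H and H̃(z,0) = H̃₀(z) for all z ∈ Z. -/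
/-!
Lift each path `t ↦ H (z, t)` separately, starting at `H₀ z`. The assembled lift is continuous
by `IsLocalHomeomorph.continuous_lift`: near any `z₀`, local inverses of `f` along a subdivision
of `[0, 1]` extend `H₀` to a continuous lift on `N × [0, 1]` for a neighbourhood `N` of `z₀`, and
since `X` is Hausdorff and `f` is locally injective, lifts of a path with the same starting point
coincide, so this lift agrees with the fiberwise one.
-/

/-- A map has the path-lifting property if every path in `Y` with prescribed initial
point over `f` lifts to a path in `X`. -/
def PathLiftingProperty {X Y : Type*} [TopologicalSpace X] [TopologicalSpace Y]
    (f : X → Y) : Prop :=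
  ∀ α : unitInterval → Y, Continuous α → ∀ x₀ : X, f x₀ = α 0 →
    ∃ αt : unitInterval → X, Continuous αt ∧ f ∘ αt = α ∧ αt 0 = x₀

theorem path_lifting_implies_homotopy_lifting_general {X Y Z : Type*}
    [TopologicalSpace X] [TopologicalSpace Y] [TopologicalSpace Z]
    [T2Space X]
    (f : X → Y) (hf : IsLocalHomeomorph f) (hpl : PathLiftingProperty f)
    (H : Z × unitInterval → Y) (hH : Continuous H)
    (H₀ : Z → X) (hH₀ : Continuous H₀)
    (hbase : ∀ z : Z, f (H₀ z) = H (z, 0)) :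
    ∃ Ht : Z × unitInterval → X, Continuous Ht ∧ f ∘ Ht = H ∧
      ∀ z : Z, Ht (z, 0) = H₀ z := by
  choose γ hγ hfγ hγ₀ using fun z ↦
    hpl (fun t ↦ H (z, t)) (by fun_prop) (H₀ z) (hbase z)
  have hlift : f ∘ (fun p ↦ γ p.2 p.1) = H ∘ Prod.swap := funext fun p ↦ congrFun (hfγ p.2) p.1
  have hcont : Continuous fun p : unitInterval × Z ↦ γ p.2 p.1 :=
    hf.continuous_lift (T2Space.isSeparatedMap f) ⟨H ∘ Prod.swap, by fun_prop⟩ hlift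
      (by simpa only [hγ₀] using hH₀) hγ
  exact ⟨fun p ↦ γ p.1 p.2, hcont.comp continuous_swap,
    funext fun p ↦ congrFun (hfγ p.1) p.2, hγ₀⟩

/-- Path-lifting implies homotopy-lifting for local homeomorphisms between
Hausdorff spaces. -/
theorem path_lifting_implies_homotopy_lifting {X Y Z : Type*}
    [TopologicalSpace X] [TopologicalSpace Y] [TopologicalSpace Z]
    [T2Space X] [T2Space Y]
    (f : X → Y) (hf : IsLocalHomeomorph f) (hpl : PathLiftingProperty f)
    (H : Z × unitInterval → Y) (hH : Continuous H)
    (H₀ : Z → X) (hH₀ : Continuous H₀)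
    (hbase : ∀ z : Z, f (H₀ z) = H (z, 0)) :
    ∃ Ht : Z × unitInterval → X, Continuous Ht ∧ f ∘ Ht = H ∧
      ∀ z : Z, Ht (z, 0) = H₀ z :=
  path_lifting_implies_homotopy_lifting_general f hf hpl H hH H₀ hH₀ hbase
end

section
/- Let f : X → Y be a local homeomorphism between Hausdorff topological spaces which has the path-lifting property. If X and Y are path-connected and Y is simply connected, then f is a homeomorphism of X onto Y. -/
open unitInterval

namespace PathLiftingProperty

variable {X Y : Type*} [TopologicalSpace X] [TopologicalSpace Y] {f : X → Y}

theorem surjective [Nonempty X] [PathConnectedSpace Y] (hpl : PathLiftingProperty f) :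
    Function.Surjective f := by
  intro y
  let x₀ : X := Classical.arbitrary X
  let γ := PathConnectedSpace.somePath (f x₀) y
  obtain ⟨Γ, -, hΓf, -⟩ := hpl γ γ.continuous x₀ γ.source.symm
  exact ⟨Γ 1, (congrFun hΓf 1).trans γ.target⟩

/-- For a path `q` from `x₁` to `x₂` with `f x₁ = f x₂`, the loop `f ∘ q` is null-homotopic; its
lift from `x₁` is `q` itself, so by the monodromy theorem `q` ends where the constant lift does. -/
theorem injective [PathConnectedSpace X] [SimplyConnectedSpace Y] (hpl : PathLiftingProperty f)
    (hf : IsLocalHomeomorph f) (hsep : IsSeparatedMap f) : Function.Injective f := by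
  intro x₁ x₂ hfx
  let q := PathConnectedSpace.somePath x₁ x₂
  let γ : Path (f x₁) (f x₁) := (q.map hf.continuous).cast rfl hfx
  obtain ⟨H⟩ := SimplyConnectedSpace.paths_homotopic γ (Path.refl (f x₁))
  choose Γ hΓc hΓf hΓ₀ using fun t : I ↦
    hpl (fun s ↦ H (t, s)) (by fun_prop) x₁ (H.source t).symm
  have lift_eq {g : I → X} (hg : Continuous g) (t : I) (hgf : f ∘ g = fun s ↦ H (t, s))
      (hg₀ : g 0 = x₁) : g = Γ t :=
    hsep.eq_of_comp_eq hf.isLocallyInjective hg (hΓc t) (hgf.trans (hΓf t).symm) 0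
      (hg₀.trans (hΓ₀ t).symm)
  have hΓ₀q : q = Γ 0 := lift_eq q.continuous 0 (funext fun s ↦ (H.apply_zero s).symm) q.source
  have hΓ₁ : (fun _ ↦ x₁) = Γ 1 :=
    lift_eq continuous_const 1 (funext fun s ↦ (H.apply_one s).symm) rfl
  have monodromy : Γ 1 1 = Γ 0 1 :=
    hf.monodromy_theorem hsep H (fun t ↦ ⟨Γ t, hΓc t⟩) (fun t s ↦ congrFun (hΓf t) s)
      (fun t ↦ (hΓ₀ t).trans (hΓ₀ 0).symm) 1
  calc x₁ = Γ 1 1 := congrFun hΓ₁ 1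
    _ = Γ 0 1 := monodromy
    _ = x₂ := by rw [← hΓ₀q, q.target]

end PathLiftingProperty

theorem homeomorph_of_path_lifting_general {X Y : Type*} [TopologicalSpace X] [TopologicalSpace Y]
    [T2Space X] [PathConnectedSpace X] [PathConnectedSpace Y]
    [SimplyConnectedSpace Y]
    (f : X → Y) (hf : IsLocalHomeomorph f) (hpl : PathLiftingProperty f) :
    IsHomeomorph f :=
  ⟨hf.continuous, hf.isOpenMap, hpl.injective hf (T2Space.isSeparatedMap f), hpl.surjective⟩

/-- A local homeomorphism between path-connected Hausdorff spaces with simply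
connected codomain which lifts paths is a homeomorphism onto `Y`. -/
theorem homeomorph_of_path_lifting {X Y : Type*} [TopologicalSpace X] [TopologicalSpace Y]
    [T2Space X] [T2Space Y] [PathConnectedSpace X] [PathConnectedSpace Y]
    [SimplyConnectedSpace Y]
    (f : X → Y) (hf : IsLocalHomeomorph f) (hpl : PathLiftingProperty f) :
    IsHomeomorph f :=
  homeomorph_of_path_lifting_general f hf hpl
end

section
/- Let f : X → Y be a local homeomorphism between Hausdorff topological spaces which is a closed map (it maps closed subsets of X to closed subsets of Y). Then f has the path-lifting property: for every continuous α : [0,1] → Y and every x₀ ∈ X with f(x₀) = α(0), there exists a continuous α̃ : [0,1] → X with f ∘ α̃ = α and α̃(0) = x₀. -/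
/-!
Lifts of a path `β` are continued along the parameter interval through the charts of `f`; the only
issue is to close up a lift defined on `[a, c)` at `c`. If `β` is constant just before `c`, a chart
at a point of the lift does it. Otherwise choose `tₙ ↑ c` with `β tₙ ≠ β c` and lifts `xₙ` of
`β tₙ`. As `f` is closed, `f (closure {xₙ})` contains `β c`; since no `xₙ` lies over `β c`, some
accumulation point `z` of `(xₙ)` does. A chart at `z` covers `β` on `[tₙ, c]` for an `n` with `xₙ`
in its source, and the lift over `[a, tₙ]` extends through that chart.
-/

open Set Filter Topology

lemma mapClusterPt_atTop_of_mem_closure_range {X : Type*} [TopologicalSpace X] [T1Space X]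
    {x : ℕ → X} {z : X} (hz : z ∈ closure (range x)) (hz' : z ∉ range x) :
    MapClusterPt z atTop x := by
  refine mapClusterPt_atTop_iff_forall_mem_closure.2 fun N => ?_
  have hsplit : range x = x '' Iio N ∪ x '' Ici N := by
    rw [← image_union, Iio_union_Ici, image_univ]
  rw [hsplit, closure_union, ((finite_Iio N).image x).isClosed.closure_eq] at hz
  exact hz.resolve_left fun h => hz' (image_subset_range x _ h)

lemma IsClosedMap.exists_mapClusterPt_of_tendsto {X Y : Type*} [TopologicalSpace X]
    [TopologicalSpace Y] [T1Space X] {f : X → Y} (hf : IsClosedMap f) {x : ℕ → X} {y : Y}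
    (hy : Tendsto (f ∘ x) atTop (𝓝 y)) (hne : ∀ n, f (x n) ≠ y) :
    ∃ z, f z = y ∧ MapClusterPt z atTop x := by
  have hy' : y ∈ closure (f '' range x) := by
    rw [← range_comp]
    exact mem_closure_of_tendsto hy (Eventually.of_forall mem_range_self)
  obtain ⟨z, hz, rfl⟩ := hf.closure_image_subset _ hy'
  exact ⟨z, rfl, mapClusterPt_atTop_of_mem_closure_range hz fun ⟨n, hn⟩ => hne n (hn ▸ rfl)⟩

section PathLifting

variable {X Y : Type*} [TopologicalSpace X] {f : X → Y} {β : ℝ → Y}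

def IsLiftOn (f : X → Y) (β : ℝ → Y) (s : Set ℝ) (g : ℝ → X) : Prop :=
  ContinuousOn g s ∧ ∀ t ∈ s, f (g t) = β t

lemma IsLiftOn.mono {s s' : Set ℝ} {g : ℝ → X} (hg : IsLiftOn f β s' g) (hs : s ⊆ s') :
    IsLiftOn f β s g :=
  ⟨hg.1.mono hs, fun t ht => hg.2 t (hs ht)⟩

variable [TopologicalSpace Y]

lemma IsLiftOn.exists_extend_of_chart {a m b : ℝ} {g : ℝ → X} (hg : IsLiftOn f β (Icc a m) g)
    (ham : a ≤ m) (hβ : ContinuousOn β (Icc m b)) {e : OpenPartialHomeomorph X Y} (hfe : f = e)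
    (hm : g m ∈ e.source) (hβe : MapsTo β (Icc m b) e.target) :
    ∃ g', IsLiftOn f β (Icc a b) g' ∧ EqOn g' g (Icc a m) := by
  have hgm : e.symm (β m) = g m := by rw [← hg.2 m ⟨ham, le_rfl⟩, hfe, e.left_inv hm]
  let g' : ℝ → X := fun t => if t ≤ m then g t else e.symm (β t)
  have hleft : EqOn g' g (Icc a m) := fun t ht => if_pos ht.2
  have hright : EqOn g' (e.symm ∘ β) (Icc m b) := by
    intro t ht
    rcases ht.1.eq_or_lt with rfl | hlt
    · simp [g', hgm]
    · simp [g', not_le.2 hlt]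
  refine ⟨g', ⟨?_, fun t ht => ?_⟩, hleft⟩
  · refine ContinuousOn.mono ?_ (Icc_subset_Icc_union_Icc (b := m))
    exact (hg.1.congr hleft).union_of_isClosed
      ((e.continuousOn_symm.comp hβ hβe).congr hright) isClosed_Icc isClosed_Icc
  · rcases le_total t m with htm | hmt
    · rw [hleft ⟨ht.1, htm⟩]
      exact hg.2 t ⟨ht.1, htm⟩
    · rw [hright ⟨hmt, ht.2⟩, Function.comp_apply, hfe, e.right_inv (hβe ⟨hmt, ht.2⟩)]

lemma IsLiftOn.exists_extend_right (hf : IsLocalHomeomorph f) {a c b : ℝ} {g : ℝ → X}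
    (hg : IsLiftOn f β (Icc a c) g) (hac : a ≤ c) (hcb : c < b) (hβ : ContinuousOn β (Icc c b)) :
    ∃ d ∈ Ioc c b, ∃ g', IsLiftOn f β (Icc a d) g' ∧ g' a = g a := by
  obtain ⟨e, hce, hfe⟩ := hf (g c)
  have hβc : β c ∈ e.target := by
    rw [← hg.2 c ⟨hac, le_rfl⟩, hfe]
    exact e.map_source hce
  have hnhds : β ⁻¹' e.target ∈ 𝓝[≥] c := by
    rw [← nhdsWithin_Icc_eq_nhdsGE hcb]
    exact hβ c (left_mem_Icc.2 hcb.le) (e.open_target.mem_nhds hβc)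
  obtain ⟨d, hcd, hsub⟩ :=
    mem_nhdsGE_iff_exists_Icc_subset.1 (inter_mem hnhds (Icc_mem_nhdsGE hcb))
  have hdb : Icc c d ⊆ Icc c b := fun t ht => (hsub ht).2
  obtain ⟨g', hg', heq⟩ :=
    hg.exists_extend_of_chart hac (hβ.mono hdb) hfe hce fun t ht => (hsub ht).1
  exact ⟨d, ⟨hcd, (hdb ⟨hcd.le, le_rfl⟩).2⟩, g', hg', heq ⟨le_rfl, hac⟩⟩

lemma exists_chart_of_eventually_eq (hf : IsLocalHomeomorph f) {a c : ℝ} (hac : a < c) {x₀ : X}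
    (h : ∀ b ∈ Ico a c, ∃ g, IsLiftOn f β (Icc a b) g ∧ g a = x₀)
    (hconst : ∀ᶠ t in 𝓝[<] c, β t = β c) :
    ∃ b ∈ Ico a c, ∃ g, IsLiftOn f β (Icc a b) g ∧ g a = x₀ ∧
      ∃ e : OpenPartialHomeomorph X Y, f = e ∧ g b ∈ e.source ∧ MapsTo β (Icc b c) e.target := by
  obtain ⟨b, hbc, hsub⟩ :=
    mem_nhdsLT_iff_exists_Ico_subset.1 (inter_mem hconst (Ico_mem_nhdsLT hac))
  have hb : b ∈ Ico a c := (hsub ⟨le_rfl, hbc⟩).2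
  obtain ⟨g, hg, hg0⟩ := h b hb
  obtain ⟨e, hbe, hfe⟩ := hf (g b)
  refine ⟨b, hb, g, hg, hg0, e, hfe, hbe, fun t ht => ?_⟩
  have hβt : β t = f (g b) := by
    rw [hg.2 b ⟨hb.1, le_rfl⟩, (hsub ⟨le_rfl, hbc⟩).1]
    rcases ht.2.eq_or_lt with rfl | htc
    · rfl
    · exact (hsub ⟨ht.1, htc⟩).1
  rw [hβt, hfe]
  exact e.map_source hbe

variable [T1Space X]

lemma exists_chart_of_frequently_ne (hf : IsLocalHomeomorph f) (hcl : IsClosedMap f)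
    {a c : ℝ} (hac : a < c) (hβ : ContinuousOn β (Icc a c)) {x₀ : X}
    (h : ∀ b ∈ Ico a c, ∃ g, IsLiftOn f β (Icc a b) g ∧ g a = x₀)
    (hfreq : ∃ᶠ t in 𝓝[<] c, β t ≠ β c) :
    ∃ b ∈ Ico a c, ∃ g, IsLiftOn f β (Icc a b) g ∧ g a = x₀ ∧
      ∃ e : OpenPartialHomeomorph X Y, f = e ∧ g b ∈ e.source ∧ MapsTo β (Icc b c) e.target := by
  obtain ⟨q, hq, hqβ⟩ := exists_seq_forall_of_frequently (hfreq.and_eventually (Ico_mem_nhdsLT hac))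
  choose g hg hg0 using fun n => h (q n) (hqβ n).2
  have hgq : ∀ n, f (g n (q n)) = β (q n) := fun n => (hg n).2 (q n) ⟨(hqβ n).2.1, le_rfl⟩
  have hqc : Tendsto q atTop (𝓝[Icc a c] c) := tendsto_nhdsWithin_iff.2
    ⟨hq.mono_right nhdsWithin_le_nhds, Eventually.of_forall fun n => Ico_subset_Icc_self (hqβ n).2⟩
  have hlim : Tendsto (fun n => f (g n (q n))) atTop (𝓝 (β c)) := by
    simp only [hgq]
    exact (hβ c (right_mem_Icc.2 hac.le)).tendsto.comp hqc
  obtain ⟨z, hz, hcluster⟩ :=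
    hcl.exists_mapClusterPt_of_tendsto hlim fun n => (hgq n).trans_ne (hqβ n).1
  obtain ⟨e, hze, hfe⟩ := hf z
  have hnhds : β ⁻¹' e.target ∈ 𝓝[≤] c := by
    rw [← nhdsWithin_Icc_eq_nhdsLE hac]
    exact hβ c (right_mem_Icc.2 hac.le) (e.open_target.mem_nhds (hz ▸ hfe ▸ e.map_source hze))
  obtain ⟨l, hlc, hsub⟩ := mem_nhdsLE_iff_exists_Icc_subset.1 hnhds
  obtain ⟨n, hn, hln⟩ := ((mapClusterPt_iff_frequently.1 hcluster _
    (e.open_source.mem_nhds hze)).and_eventually ((hq.mono_right nhdsWithin_le_nhds).eventually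
      (lt_mem_nhds hlc))).exists
  exact ⟨q n, (hqβ n).2, g n, hg n, hg0 n, e, hfe, hn, fun t ht => hsub ⟨hln.le.trans ht.1, ht.2⟩⟩

lemma exists_isLiftOn_Icc_of_forall_lt (hf : IsLocalHomeomorph f) (hcl : IsClosedMap f)
    {a c : ℝ} (hac : a < c) (hβ : ContinuousOn β (Icc a c)) {x₀ : X}
    (h : ∀ b ∈ Ico a c, ∃ g, IsLiftOn f β (Icc a b) g ∧ g a = x₀) :
    ∃ g, IsLiftOn f β (Icc a c) g ∧ g a = x₀ := by
  obtain ⟨b, hb, g, hg, hg0, e, hfe, hbe, hβe⟩ :=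
    (em (∀ᶠ t in 𝓝[<] c, β t = β c)).elim (exists_chart_of_eventually_eq hf hac h)
      fun hconst => exists_chart_of_frequently_ne hf hcl hac hβ h (not_eventually.1 hconst)
  obtain ⟨g', hg', heq⟩ :=
    hg.exists_extend_of_chart hb.1 (hβ.mono (Icc_subset_Icc_left hb.1)) hfe hbe hβe
  exact ⟨g', hg', (heq ⟨le_rfl, hb.1⟩).trans hg0⟩

theorem exists_isLiftOn_Icc (hf : IsLocalHomeomorph f) (hcl : IsClosedMap f) {a b : ℝ}
    (hab : a ≤ b) (hβ : ContinuousOn β (Icc a b)) {x₀ : X} (hx₀ : f x₀ = β a) :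
    ∃ g, IsLiftOn f β (Icc a b) g ∧ g a = x₀ := by
  let T := {d ∈ Icc a b | ∃ g, IsLiftOn f β (Icc a d) g ∧ g a = x₀}
  have haT : a ∈ T := ⟨left_mem_Icc.2 hab, fun _ => x₀,
    ⟨continuousOn_const, by simp [hx₀]⟩, rfl⟩
  have hbdd : BddAbove T := ⟨b, fun d hd => hd.1.2⟩
  set c := sSup T
  have hac : a ≤ c := le_csSup hbdd haT
  have hcb : c ≤ b := csSup_le ⟨a, haT⟩ fun d hd => hd.1.2
  obtain ⟨g, hg, hg0⟩ : ∃ g, IsLiftOn f β (Icc a c) g ∧ g a = x₀ := by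
    rcases hac.eq_or_lt with hac | hac
    · exact hac ▸ haT.2
    refine exists_isLiftOn_Icc_of_forall_lt hf hcl hac (hβ.mono (Icc_subset_Icc_right hcb))
      fun d hd => ?_
    obtain ⟨d', ⟨-, g, hg, hg0⟩, hdd'⟩ := exists_lt_of_lt_csSup ⟨a, haT⟩ hd.2
    exact ⟨g, hg.mono (Icc_subset_Icc_right hdd'.le), hg0⟩
  suffices c = b from this ▸ ⟨g, hg, hg0⟩
  refine hcb.antisymm (not_lt.1 fun hcb' => ?_)
  obtain ⟨d, hd, g', hg', hg'0⟩ :=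
    hg.exists_extend_right hf hac hcb' (hβ.mono (Icc_subset_Icc_left hac))
  exact (le_csSup hbdd ⟨⟨hac.trans hd.1.le, hd.2⟩, g', hg', hg'0.trans hg0⟩).not_gt hd.1

end PathLifting

theorem path_lifting_of_closed_general {X Y : Type*} [TopologicalSpace X] [TopologicalSpace Y]
    [T2Space X]
    (f : X → Y) (hf : IsLocalHomeomorph f)
    (hclosed : ∀ C : Set X, IsClosed C → IsClosed (f '' C)) :
    ∀ α : unitInterval → Y, Continuous α → ∀ x₀ : X, f x₀ = α 0 →
      ∃ αt : unitInterval → X, Continuous αt ∧ f ∘ αt = α ∧ αt 0 = x₀ := by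
  intro α hα x₀ hx₀
  obtain ⟨g, ⟨hg, hgα⟩, hg0⟩ := exists_isLiftOn_Icc hf hclosed zero_le_one
    (hα.Icc_extend' (h := zero_le_one)).continuousOn (x₀ := x₀) (by rwa [IccExtend_left])
  refine ⟨fun t => g t, hg.domRestrict, funext fun t => ?_, hg0⟩
  simpa only [Function.comp_apply, IccExtend_val] using hgα t t.2

/-- A closed local homeomorphism between Hausdorff spaces has the path-lifting
property. -/
theorem path_lifting_of_closed {X Y : Type*} [TopologicalSpace X] [TopologicalSpace Y]
    [T2Space X] [T2Space Y]
    (f : X → Y) (hf : IsLocalHomeomorph f)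
    (hclosed : ∀ C : Set X, IsClosed C → IsClosed (f '' C)) :
    ∀ α : unitInterval → Y, Continuous α → ∀ x₀ : X, f x₀ = α 0 →
      ∃ αt : unitInterval → X, Continuous αt ∧ f ∘ αt = α ∧ αt 0 = x₀ :=
  path_lifting_of_closed_general f hf hclosed
end

section
/- Let X and Y be metrizable topological spaces without isolated points, and let f : X → Y be a local homeomorphism which is a closed map (it maps closed subsets of X to closed subsets of Y). Then f is a proper map. -/
/-!
A closed map with compact fibres is proper, and the fibres of a local homeomorphism are
discrete, so it suffices to show that they are finite. Suppose the fibre over `y` contains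
distinct points `x₀, x₁, …`. None of them is isolated and `f` is injective near each, so there
are points `zₙ` with `d(zₙ, xₙ) → 0`, `f zₙ → y` and `f zₙ ≠ y`. Local injectivity makes the
family `{xₙ}` locally finite, and so is the nearby family `{zₙ}`; hence `{zₙ}` is closed, so its
image is closed and contains its limit point `y`, which is impossible.
-/

open Filter Function Metric Set Topology

theorem LocallyFinite.singleton_of_tendsto_dist {ι X : Type*} [PseudoMetricSpace X]
    {x z : ι → X} (hx : LocallyFinite fun i ↦ ({x i} : Set X))
    (hxz : Tendsto (fun i ↦ dist (z i) (x i)) cofinite (𝓝 0)) :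
    LocallyFinite fun i ↦ ({z i} : Set X) := by
  intro w
  obtain ⟨U, hU, hfin⟩ := hx w
  obtain ⟨ε, hε, hball⟩ := Metric.mem_nhds_iff.1 hU
  have hclose : {i | ¬dist (z i) (x i) < ε / 2}.Finite :=
    eventually_cofinite.1 (hxz.eventually (gt_mem_nhds (half_pos hε)))
  refine ⟨ball w (ε / 2), ball_mem_nhds w (half_pos hε), (hfin.union hclose).subset ?_⟩
  rintro i ⟨_, rfl, hzi⟩
  by_cases hi : dist (z i) (x i) < ε / 2
  · refine Or.inl ⟨x i, rfl, hball ?_⟩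
    calc dist (x i) w ≤ dist (z i) (x i) + dist (z i) w := dist_triangle_left _ _ _
      _ < ε / 2 + ε / 2 := add_lt_add hi hzi
      _ = ε := add_halves ε
  · exact Or.inr hi

section LocallyInjective

variable {X Y : Type*} [TopologicalSpace X] {f : X → Y}

theorem IsLocallyInjective.locallyFinite_singleton_of_apply_eq {ι : Type*}
    (hf : IsLocallyInjective f) {x : ι → X} (hx : Injective x) {y : Y}
    (hxy : ∀ i, f (x i) = y) : LocallyFinite fun i ↦ ({x i} : Set X) := by
  intro w
  obtain ⟨U, hU, hwU, hinj⟩ := hf w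
  refine ⟨U, hU.mem_nhds hwU, Subsingleton.finite ?_⟩
  rintro i ⟨_, rfl, hi⟩ j ⟨_, rfl, hj⟩
  exact hx (hinj hi hj ((hxy i).trans (hxy j).symm))

theorem IsLocallyInjective.eventually_apply_ne (hf : IsLocallyInjective f) (x : X) :
    ∀ᶠ z in 𝓝[≠] x, f z ≠ f x := by
  obtain ⟨U, hU, hxU, hinj⟩ := hf x
  filter_upwards [nhdsWithin_le_nhds (hU.mem_nhds hxU), self_mem_nhdsWithin] with z hzU hzx hfz
  exact hzx (hinj hzU hxU hfz)

end LocallyInjective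

theorem IsLocallyInjective.finite_preimage_singleton_of_isClosedMap {X Y : Type*}
    [MetricSpace X] [TopologicalSpace Y] [FirstCountableTopology Y] {f : X → Y}
    (hX : ∀ x : X, ¬IsOpen ({x} : Set X)) (hf : IsLocallyInjective f) (hcont : Continuous f)
    (hcl : IsClosedMap f) (y : Y) : (f ⁻¹' {y}).Finite := by
  by_contra hinf
  let e := Set.Infinite.natEmbedding _ hinf
  let x : ℕ → X := fun n ↦ e n
  have hxy : ∀ n, f (x n) = y := fun n ↦ (e n).2
  have hx : Injective x := Subtype.val_injective.comp e.injective
  obtain ⟨V, hV⟩ := (𝓝 y).exists_antitone_basis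
  have hz : ∀ n, ∃ z, (z ∈ ball (x n) (1 / (n + 1)) ∧ f z ∈ V n) ∧ f z ≠ y := by
    intro n
    have : (𝓝[≠] x n).NeBot := ⟨fun h ↦ hX _ ((isOpen_singleton_iff_punctured_nhds _).2 h)⟩
    have hnear : ∀ᶠ z in 𝓝 (x n), z ∈ ball (x n) (1 / (n + 1)) ∧ f z ∈ V n :=
      Eventually.and (ball_mem_nhds _ Nat.one_div_pos_of_nat)
        (hcont.continuousAt.preimage_mem_nhds (hxy n ▸ hV.mem n))
    simpa only [hxy n] using ((eventually_nhdsWithin_of_eventually_nhds hnear).and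
      (hf.eventually_apply_ne (x n))).exists
  choose z hz hzy using hz
  have hdist : Tendsto (fun n ↦ dist (z n) (x n)) cofinite (𝓝 0) := by
    rw [Nat.cofinite_eq_atTop]
    exact squeeze_zero (fun _ ↦ dist_nonneg) (fun n ↦ (hz n).1.le)
      tendsto_one_div_add_atTop_nhds_zero_nat
  have hclosed : IsClosed (range z) := by
    rw [← iUnion_singleton_eq_range]
    exact ((hf.locallyFinite_singleton_of_apply_eq hx hxy).singleton_of_tendsto_dist
      hdist).isClosed_iUnion fun _ ↦ isClosed_singleton
  have hy : y ∈ closure (f '' range z) :=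
    mem_closure_of_tendsto (hV.tendsto fun n ↦ (hz n).2)
      (Eventually.of_forall fun n ↦ mem_image_of_mem f (mem_range_self n))
  obtain ⟨_, ⟨n, rfl⟩, hn⟩ := (hcl _ hclosed).closure_eq ▸ hy
  exact hzy n hn

theorem proper_of_closed_localHomeo_general {X Y : Type*} [TopologicalSpace X] [TopologicalSpace Y]
    [TopologicalSpace.MetrizableSpace X] [TopologicalSpace.MetrizableSpace Y]
    (hX : ∀ x : X, ¬ IsOpen ({x} : Set X))
    (f : X → Y) (hf : IsLocalHomeomorph f)
    (hclosed : ∀ C : Set X, IsClosed C → IsClosed (f '' C)) :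
    Continuous f ∧ ∀ K : Set Y, IsCompact K → IsCompact (f ⁻¹' K) := by
  let : MetricSpace X := TopologicalSpace.metrizableSpaceMetric X
  have hfibres (y : Y) : (f ⁻¹' {y}).Finite :=
    hf.isLocallyInjective.finite_preimage_singleton_of_isClosedMap hX hf.continuous hclosed y
  have hproper : IsProperMap f := isProperMap_iff_isClosedMap_and_compact_fibers.2
    ⟨hf.continuous, hclosed, fun y ↦ (hfibres y).isCompact⟩
  exact ⟨hproper.continuous, fun K hK ↦ hproper.isCompact_preimage hK⟩

/-- A closed local homeomorphism between metrizable spaces without isolated points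
is a proper map. -/
theorem proper_of_closed_localHomeo {X Y : Type*} [TopologicalSpace X] [TopologicalSpace Y]
    [TopologicalSpace.MetrizableSpace X] [TopologicalSpace.MetrizableSpace Y]
    (hX : ∀ x : X, ¬ IsOpen ({x} : Set X)) (hY : ∀ y : Y, ¬ IsOpen ({y} : Set Y))
    (f : X → Y) (hf : IsLocalHomeomorph f)
    (hclosed : ∀ C : Set X, IsClosed C → IsClosed (f '' C)) :
    Continuous f ∧ ∀ K : Set Y, IsCompact K → IsCompact (f ⁻¹' K) :=
  proper_of_closed_localHomeo_general hX f hf hclosed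
end

section
/- For every n ≥ 3 there is no product operation m : ℝⁿ × ℝⁿ → ℝⁿ satisfying, for all x, y, z ∈ ℝⁿ and all a ∈ ℝ: (i) m(x, a·y) = m(a·x, y) = a·m(x,y); (ii) m(x, y+z) = m(x,y) + m(x,z); (iii) m(x,y) = 0 implies x = 0 or y = 0; (iv) m(x,y) = m(y,x). In other words, ℝⁿ with n ≥ 3 admits no commutative (not necessarily associative) algebra structure without zero divisors. -/
/-!
The squaring map `q x = B x x` of a commutative bilinear product without zero divisors identifies
exactly `x` and `-x`, is a local diffeomorphism away from `0` (its derivative `2 • B x` is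
injective) and is proper (`‖q x‖ ≥ c ‖x‖²`), so it is a two-sheeted covering of `E ∖ {0}` by itself,
and in particular it is onto. Pick `u ≠ 0` and `w` with `q w = -q u`. The path
`a • u + (1 - a²) • w`, `a = 1 - 2t`, runs from `u` to `-u`, and its image under `q` is a loop in
the plane spanned by `q u` and `B u w`. When `dim E ≥ 3`, the straight-line homotopy to a point off
that plane contracts this loop inside `E ∖ {0}`; lifting the homotopy shows that the path closes
up, i.e. `u = -u`.
-/

open Set Filter unitInterval

theorem IsCoveringMapOn.apply_zero_eq_apply_one_of_homotopy {E X : Type*} [TopologicalSpace E]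
    [TopologicalSpace X] {p : E → X} {s : Set X} (hp : IsCoveringMapOn p s) {γ : I → E}
    (hγ : Continuous γ) {H : I × I → X} (hH : Continuous H) (hHs : ∀ z, H z ∈ s)
    (h₀ : ∀ t, H (0, t) = p (γ t)) (hloop : ∀ r, H (r, 0) = H (r, 1))
    (h₁ : ∀ t, H (1, t) = H (1, 0)) : γ 0 = γ 1 := by
  have cov := hp.isCoveringMap_restrictPreimage
  let γ' : C(I, p ⁻¹' s) :=
    ⟨fun t => ⟨γ t, show p (γ t) ∈ s from h₀ t ▸ hHs (0, t)⟩, hγ.subtype_mk _⟩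
  let H' : C(I × I, s) := ⟨fun z => ⟨H z, hHs z⟩, hH.subtype_mk _⟩
  let L := cov.liftHomotopy H' γ' fun t => Subtype.ext (h₀ t)
  have hL (z : I × I) : s.restrictPreimage p (L z) = H' z :=
    congr_fun (cov.liftHomotopy_lifts H' γ' _) z
  -- The lift of the constant loop `H (1, ·)` is constant, so the lifts of the common side
  -- `H (·, 0) = H (·, 1)` agree at `r = 1`, hence everywhere.
  have hend : L (1, 0) = L (1, 1) :=
    cov.const_of_comp (g := fun t => L (1, t)) (by fun_prop)
      (fun t t' => by rw [hL, hL]; exact Subtype.ext ((h₁ t).trans (h₁ t').symm)) 0 1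
  have hedges : (fun r => L (r, 0)) = fun r => L (r, 1) :=
    cov.eq_of_comp_eq (by fun_prop) (by fun_prop)
      (funext fun r => by simp only [Function.comp_apply, hL]; exact Subtype.ext (hloop r)) 1 hend
  have := congr_fun hedges 0
  simp only [L, cov.liftHomotopy_zero] at this
  exact congrArg Subtype.val this

namespace ContinuousLinearMap

variable {E : Type*} [NormedAddCommGroup E] [NormedSpace ℝ E] {B : E →L[ℝ] E →L[ℝ] E}

theorem apply_self_eq_zero_iff (hB : ∀ x y, B x y = 0 → x = 0 ∨ y = 0) {x : E} :
    B x x = 0 ↔ x = 0 :=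
  ⟨fun h => (hB x x h).elim id id, fun h => by simp [h]⟩

theorem eq_or_eq_neg_of_apply_self_eq (hB : ∀ x y, B x y = 0 → x = 0 ∨ y = 0)
    (hcomm : ∀ x y, B x y = B y x) {x y : E} (h : B x x = B y y) : x = y ∨ x = -y := by
  have : B (x - y) (x + y) = 0 := by
    simp only [map_sub, map_add, sub_apply, hcomm y x, h]
    abel
  exact (hB _ _ this).imp sub_eq_zero.mp eq_neg_of_add_eq_zero_left

theorem hasStrictFDerivAt_apply_self (hcomm : ∀ x y, B x y = B y x) (x : E) :
    HasStrictFDerivAt (fun x => B x x) ((2 : ℝ) • B x) x := by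
  refine (B.hasStrictFDerivAt_of_bilinear (hasStrictFDerivAt_id x)
    (hasStrictFDerivAt_id x)).congr_fderiv ?_
  ext v
  simp [two_smul, hcomm v x]

theorem linearIndependent_of_apply_self_eq_neg (hB : ∀ x y, B x y = 0 → x = 0 ∨ y = 0)
    {u w : E} (hu : u ≠ 0) (hw : B w w = -B u u) : LinearIndependent ℝ ![u, w] := by
  refine LinearIndependent.pair_iff.2 fun s t hst => ?_
  have hsq : B (t • w) (t • w) = B (s • u) (s • u) := by
    rw [eq_neg_of_add_eq_zero_right hst]
    simp only [map_neg, neg_apply, neg_neg]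
  simp only [map_smul, smul_apply, smul_smul, hw, smul_neg] at hsq
  have : (s * s + t * t) • B u u = 0 := by rw [add_smul, ← hsq]; abel
  have hsum : s * s + t * t = 0 :=
    (smul_eq_zero.1 this).resolve_right fun h => hu ((apply_self_eq_zero_iff hB).1 h)
  constructor <;> nlinarith [mul_self_nonneg s, mul_self_nonneg t]

theorem apply_self_smul_add_smul_mem_span (hcomm : ∀ x y, B x y = B y x) {u w : E}
    (hw : B w w = -B u u) (a b : ℝ) :
    B (a • u + b • w) (a • u + b • w) ∈ Submodule.span ℝ {B u u, B u w} := by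
  have : B (a • u + b • w) (a • u + b • w) = (a ^ 2 - b ^ 2) • B u u + (2 * a * b) • B u w := by
    simp only [map_add, map_smul, add_apply, smul_apply, hcomm w u, hw]
    module
  rw [this]
  exact Submodule.add_mem _ (Submodule.smul_mem _ _ (Submodule.subset_span (by simp)))
    (Submodule.smul_mem _ _ (Submodule.subset_span (by simp)))

theorem exists_pos_mul_sq_norm_le_norm_apply_self [FiniteDimensional ℝ E]
    (hB : ∀ x y, B x y = 0 → x = 0 ∨ y = 0) :
    ∃ c > 0, ∀ x : E, c * ‖x‖ ^ 2 ≤ ‖B x x‖ := by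
  obtain ⟨c, hc, hsphere⟩ := (isCompact_sphere (0 : E) 1).exists_forall_le'
    (by fun_prop : Continuous fun x => ‖B x x‖).continuousOn
    (a := 0) fun x hx => norm_pos_iff.2 fun h =>
      by simp [(apply_self_eq_zero_iff hB).1 h] at hx
  refine ⟨c, hc, fun x => ?_⟩
  rcases eq_or_ne x 0 with rfl | hx
  · simp
  have hnx : 0 < ‖x‖ := norm_pos_iff.2 hx
  have hunit := hsphere (‖x‖⁻¹ • x) (by simp [norm_smul, hnx.ne'])
  simp only [map_smul, smul_apply, smul_smul, norm_smul, norm_mul, norm_inv, norm_norm]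
    at hunit
  calc c * ‖x‖ ^ 2 ≤ (‖x‖⁻¹ * ‖x‖⁻¹ * ‖B x x‖) * ‖x‖ ^ 2 := by gcongr
    _ = ‖B x x‖ := by field_simp

theorem isProperMap_apply_self [FiniteDimensional ℝ E] (hB : ∀ x y, B x y = 0 → x = 0 ∨ y = 0) :
    IsProperMap fun x : E => B x x := by
  obtain ⟨c, hc, hbound⟩ := exists_pos_mul_sq_norm_le_norm_apply_self hB
  refine isProperMap_iff_tendsto_cocompact.2 ⟨by fun_prop, ?_⟩
  rw [← Metric.cobounded_eq_cocompact, ← tendsto_norm_atTop_iff_cobounded]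
  exact tendsto_atTop_mono hbound
    (((tendsto_pow_atTop two_ne_zero).comp tendsto_norm_cobounded_atTop).const_mul_atTop hc)

theorem isLocalHomeomorphOn_apply_self [FiniteDimensional ℝ E]
    (hB : ∀ x y, B x y = 0 → x = 0 ∨ y = 0) (hcomm : ∀ x y, B x y = B y x) :
    IsLocalHomeomorphOn (fun x : E => B x x) {0}ᶜ := by
  intro x hx
  have hinj : Function.Injective ((2 : ℝ) • B x : E →ₗ[ℝ] E) := by
    refine (injective_iff_map_eq_zero _).2 fun v hv => ?_
    simp only [LinearMap.smul_apply, ContinuousLinearMap.coe_coe, smul_eq_zero] at hv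
    exact (hB x v (hv.resolve_left two_ne_zero)).resolve_left hx
  let L : E ≃L[ℝ] E := (LinearEquiv.ofInjectiveEndo _ hinj).toContinuousLinearEquiv
  have hL : HasStrictFDerivAt (fun x => B x x) (L : E →L[ℝ] E) x :=
    (hasStrictFDerivAt_apply_self hcomm x).congr_fderiv (by ext; rfl)
  exact ⟨hL.toOpenPartialHomeomorph _, hL.mem_toOpenPartialHomeomorph_source,
    hL.toOpenPartialHomeomorph_coe.symm⟩

theorem isCoveringMapOn_apply_self [FiniteDimensional ℝ E]
    (hB : ∀ x y, B x y = 0 → x = 0 ∨ y = 0) (hcomm : ∀ x y, B x y = B y x) :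
    IsCoveringMapOn (fun x : E => B x x) {0}ᶜ := by
  refine (isProperMap_apply_self hB).isClosedMap.isCoveringMapOn_of_isLocalHomeomorphOn
    (fun y _ => ?_) ((isLocalHomeomorphOn_apply_self hB hcomm).mono fun x hx (h : x = 0) => hx ?_)
  · rcases ((fun x : E => B x x) ⁻¹' {y}).eq_empty_or_nonempty with h | ⟨x, hx⟩
    · simp [h]
    · exact (toFinite {x, -x}).subset fun x' hx' =>
        eq_or_eq_neg_of_apply_self_eq hB hcomm (hx'.trans hx.symm)
  · simp [h]

theorem surjOn_apply_self [FiniteDimensional ℝ E] (hE : 1 < Module.finrank ℝ E)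
    (hB : ∀ x y, B x y = 0 → x = 0 ∨ y = 0) (hcomm : ∀ x y, B x y = B y x) :
    SurjOn (fun x : E => B x x) {0}ᶜ {0}ᶜ := by
  have : Nontrivial E := Module.nontrivial_of_finrank_pos (R := ℝ) (by omega)
  have hopen : IsOpen ((fun x : E => B x x) '' {0}ᶜ) := by
    refine isOpen_iff_mem_nhds.2 ?_
    rintro _ ⟨x, hx, rfl⟩
    rw [← (isLocalHomeomorphOn_apply_self hB hcomm).map_nhds_eq hx]
    exact image_mem_map (isOpen_compl_singleton.mem_nhds hx)
  obtain ⟨x, hx⟩ := exists_ne (0 : E)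
  refine (isConnected_compl_singleton_of_one_lt_rank ?_ 0).isPreconnected
    |>.subset_of_closure_inter_subset hopen ⟨B x x, ?_, x, hx, rfl⟩ ?_
  · rw [← Module.finrank_eq_rank]
    exact_mod_cast hE
  · exact fun h => hx ((apply_self_eq_zero_iff hB).1 h)
  · rintro y ⟨hy, hy0⟩
    obtain ⟨x, rfl⟩ : y ∈ range fun x : E => B x x :=
      (isProperMap_apply_self hB).isClosedMap.isClosed_range.closure_subset
        (closure_mono (image_subset_range _ _) hy)
    exact ⟨x, fun (h : x = 0) => hy0 (by simp [h]), rfl⟩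

theorem eq_zero_of_apply_self_eq_neg [FiniteDimensional ℝ E]
    (hB : ∀ x y, B x y = 0 → x = 0 ∨ y = 0) (hcomm : ∀ x y, B x y = B y x) {u w p : E}
    (hw : B w w = -B u u) (hp : p ∉ Submodule.span ℝ {B u u, B u w}) : u = 0 := by
  by_contra hu
  have hind := LinearIndependent.pair_iff.1 (linearIndependent_of_apply_self_eq_neg hB hu hw)
  let a : I → ℝ := fun t => 1 - 2 * t
  let γ : I → E := fun t => a t • u + (1 - a t ^ 2) • w
  have hγ (t : I) : γ t ≠ 0 := fun h => by
    obtain ⟨ha, ha'⟩ := hind _ _ h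
    simp [ha] at ha'
  have hγ0 : γ 0 = u := by norm_num [γ, a]
  have hγ1 : γ 1 = -u := by norm_num [γ, a]
  let H : I × I → E := fun z => (1 - (z.1 : ℝ)) • B (γ z.2) (γ z.2) + (z.1 : ℝ) • p
  have hH : ∀ z, H z ∈ ({0}ᶜ : Set E) := by
    rintro ⟨r, t⟩ (h : _ = _)
    rcases eq_or_ne (r : ℝ) 0 with hr | hr
    · simp only [H, hr, sub_zero, one_smul, zero_smul, add_zero] at h
      exact hγ t ((apply_self_eq_zero_iff hB).1 h)
    · refine hp ((Submodule.smul_mem_iff _ hr).1 ?_)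
      rw [eq_neg_of_add_eq_zero_right h]
      exact Submodule.neg_mem _
        (Submodule.smul_mem _ _ (apply_self_smul_add_smul_mem_span hcomm hw _ _))
  have hγ01 := (isCoveringMapOn_apply_self hB hcomm).apply_zero_eq_apply_one_of_homotopy
    (γ := γ) (by fun_prop) (H := H) (by fun_prop) hH (fun t => by simp [H])
    (fun r => by simp [H, hγ0, hγ1]) (fun t => by simp [H])
  rw [hγ0, hγ1] at hγ01
  have := IsAddTorsionFree.of_isTorsionFree ℝ E
  exact hu (self_eq_neg.1 hγ01)

theorem finrank_le_two_of_comm_of_noZeroDivisors [FiniteDimensional ℝ E]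
    (hB : ∀ x y, B x y = 0 → x = 0 ∨ y = 0) (hcomm : ∀ x y, B x y = B y x) :
    Module.finrank ℝ E ≤ 2 := by
  by_contra! hE
  have : Nontrivial E := Module.nontrivial_of_finrank_pos (R := ℝ) (by omega)
  obtain ⟨u, hu⟩ := exists_ne (0 : E)
  obtain ⟨w, -, hw⟩ := surjOn_apply_self (by omega) hB hcomm
    (neg_ne_zero.2 ((apply_self_eq_zero_iff hB).not.2 hu))
  obtain ⟨p, hp⟩ : ∃ p, p ∉ Submodule.span ℝ {B u u, B u w} := by
    by_contra! h
    have := finrank_range_le_card (R := ℝ) ![B u u, B u w]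
    rw [Matrix.range_cons_cons_empty, Set.finrank, Submodule.eq_top_iff'.2 h, finrank_top] at this
    simp only [Fintype.card_fin] at this
    omega
  exact hu (eq_zero_of_apply_self_eq_neg hB hcomm hw hp)

end ContinuousLinearMap

/-- Nonexistence of a product in `ℝⁿ` for `n ≥ 3`: there is no commutative
(not necessarily associative) bilinear product on `ℝⁿ` without zero divisors. -/
theorem no_commutative_product (n : ℕ) (hn : 3 ≤ n) :
    ¬ ∃ m : EuclideanSpace ℝ (Fin n) → EuclideanSpace ℝ (Fin n) → EuclideanSpace ℝ (Fin n),
      (∀ (a : ℝ) (x y : EuclideanSpace ℝ (Fin n)),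
        m x (a • y) = a • m x y ∧ m (a • x) y = a • m x y) ∧
      (∀ x y z : EuclideanSpace ℝ (Fin n), m x (y + z) = m x y + m x z) ∧
      (∀ x y : EuclideanSpace ℝ (Fin n), m x y = 0 → x = 0 ∨ y = 0) ∧
      (∀ x y : EuclideanSpace ℝ (Fin n), m x y = m y x) := by
  rintro ⟨m, hsmul, hadd, hzero, hcomm⟩
  have hm : IsBilinearMap ℝ m :=
    { add_left := fun x y z => by rw [hcomm, hadd, hcomm z, hcomm z]
      smul_left := fun a x y => (hsmul a x y).2
      add_right := hadd
      smul_right := fun a x y => (hsmul a x y).1 }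
  have := ContinuousLinearMap.finrank_le_two_of_comm_of_noZeroDivisors
    (B := hm.toContinuousBilinearMap) hzero hcomm
  rw [finrank_euclideanSpace_fin] at this
  omega
end

section
/- Let X and Y be Banach spaces, D ⊆ X a nonempty open connected set, f : D → Y a local homeomorphism, x₀ ∈ D, y₀ = f(x₀), and let (D_Φ, Φ) be the maximal auxiliary flow for f at x₀. Define the attraction basin 𝒜 := {x ∈ D : [0,∞) ⊆ I_x and Φ(x,t) → x₀ as t → +∞}, i.e. 𝒜 is the set of x ∈ D whose forward trajectory is defined for all t ≥ 0 and converges to x₀. Then 𝒜 is an open subset of D containing x₀, the restriction f|𝒜 is injective, and the image f(𝒜) is star-shaped with respect to y₀ (for every y ∈ f(𝒜) and s ∈ [0,1], y₀ + s(y − y₀) ∈ f(𝒜)). -/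
open Set Filter

/-- `f : D → Y` is a local homeomorphism on the open set `D` if every point of `D` has an
open neighbourhood `U ⊆ D` such that `f(U)` is open and `f|U : U → f(U)` is a
homeomorphism. -/
def IsLocalHomeoOn {X Y : Type*} [TopologicalSpace X] [TopologicalSpace Y]
    (f : X → Y) (D : Set X) : Prop :=
  ∀ x ∈ D, ∃ U : Set X, U ⊆ D ∧ IsOpen U ∧ x ∈ U ∧ IsOpen (f '' U) ∧
    ContinuousOn f U ∧ ∃ g : Y → X, ContinuousOn g (f '' U) ∧
      (∀ u ∈ U, g (f u) = u) ∧ ∀ y ∈ f '' U, g y ∈ U ∧ f (g y) = y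

/-- The maximal auxiliary flow `Φ : D_Φ → D` for a map `f : D → Y` at the point `x₀`:
`D_Φ ⊆ D × ℝ` is open, each section `I_x = {t : (x,t) ∈ D_Φ}` is an interval containing
`0`, `Φ(x,0) = x`, the flow law `Φ(Φ(x,t₁),t₂) = Φ(x,t₁+t₂)` holds,
`f(Φ(x,t)) = f(x₀) + e^{-t}(f(x) - f(x₀))` on `D_Φ`, and `Φ` is maximal among such
liftings. -/
structure AuxFlow {X Y : Type*} [NormedAddCommGroup X] [NormedSpace ℝ X]
    [NormedAddCommGroup Y] [NormedSpace ℝ Y]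
    (D : Set X) (f : X → Y) (x₀ : X) where
  dom : Set (X × ℝ)
  flow : X → ℝ → X
  isOpen_dom : IsOpen dom
  dom_subset : ∀ p ∈ dom, p.1 ∈ D
  zero_mem : ∀ x ∈ D, (x, (0 : ℝ)) ∈ dom
  interval : ∀ x ∈ D, Set.OrdConnected {t : ℝ | (x, t) ∈ dom}
  mem_of_dom : ∀ p ∈ dom, flow p.1 p.2 ∈ D
  continuousOn : ContinuousOn (fun p : X × ℝ => flow p.1 p.2) dom
  flow_zero : ∀ x ∈ D, flow x 0 = x
  flow_add : ∀ (x : X) (t₁ t₂ : ℝ), (x, t₁) ∈ dom → (x, t₁ + t₂) ∈ dom →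
    (flow x t₁, t₂) ∈ dom ∧ flow (flow x t₁) t₂ = flow x (t₁ + t₂)
  lifts : ∀ p ∈ dom, f (flow p.1 p.2) = f x₀ + Real.exp (-p.2) • (f p.1 - f x₀)
  maximal : ∀ x ∈ D, ∀ J : Set ℝ, J.OrdConnected → (0 : ℝ) ∈ J →
    ∀ ψ : ℝ → X, ContinuousOn ψ J → ψ 0 = x →
    (∀ t ∈ J, ψ t ∈ D ∧ f (ψ t) = f x₀ + Real.exp (-t) • (f x - f x₀)) →
    ∀ t ∈ J, (x, t) ∈ dom ∧ ψ t = flow x t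

/-- The attraction basin of `x₀`: the set of points of `D` whose forward trajectory is
defined for all `t ≥ 0` and converges to `x₀` as `t → +∞`. -/
def AuxFlow.basin {X Y : Type*} [NormedAddCommGroup X] [NormedSpace ℝ X]
    [NormedAddCommGroup Y] [NormedSpace ℝ Y]
    {D : Set X} {f : X → Y} {x₀ : X} (F : AuxFlow D f x₀) : Set X :=
  {x ∈ D | (∀ t : ℝ, 0 ≤ t → (x, t) ∈ F.dom) ∧
    Filter.Tendsto (fun t : ℝ => F.flow x t) Filter.atTop (nhds x₀)}


section Helpers

lemma continuousOn_union_of_isClosed' {α β : Type*} [TopologicalSpace α] [TopologicalSpace β]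
    {f : α → β} {s t : Set α} (hs : IsClosed s) (ht : IsClosed t)
    (h1 : ContinuousOn f s) (h2 : ContinuousOn f t) : ContinuousOn f (s ∪ t) := by
  intro x hx
  rcases hx with hxs | hxt
  · refine (h1 x hxs).union ?_
    by_cases hxt : x ∈ t
    · exact h2 x hxt
    · exact continuousWithinAt_of_notMem_closure (by rwa [ht.closure_eq])
  · refine ContinuousWithinAt.union ?_ (h2 x hxt)
    by_cases hxs : x ∈ s
    · exact h1 x hxs
    · exact continuousWithinAt_of_notMem_closure (by rwa [hs.closure_eq])

variable {X Y : Type*} [NormedAddCommGroup X] [NormedSpace ℝ X]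
  [NormedAddCommGroup Y] [NormedSpace ℝ Y]
  {D : Set X} {f : X → Y} {x₀ : X}

lemma AuxFlow.x0_fixed (F : AuxFlow D f x₀) (hx₀ : x₀ ∈ D) (t : ℝ) :
    (x₀, t) ∈ F.dom ∧ F.flow x₀ t = x₀ := by
  have h := F.maximal x₀ hx₀ Set.univ Set.ordConnected_univ (mem_univ 0)
    (fun _ => x₀) continuousOn_const rfl (fun t _ => ⟨hx₀, by simp⟩) t (mem_univ t)
  exact ⟨h.1, h.2.symm⟩

lemma AuxFlow.x0_mem_basin (F : AuxFlow D f x₀) (hx₀ : x₀ ∈ D) : x₀ ∈ F.basin := by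
  refine ⟨hx₀, fun t _ => (F.x0_fixed hx₀ t).1, ?_⟩
  exact Filter.Tendsto.congr (fun t => ((F.x0_fixed hx₀ t).2).symm) tendsto_const_nhds

lemma AuxFlow.forward (F : AuxFlow D f x₀) {x : X} (hx : x ∈ F.basin) {t : ℝ} (ht : 0 ≤ t) :
    F.flow x t ∈ F.basin := by
  obtain ⟨hxD, hdom, htend⟩ := hx
  have hmem : ∀ u : ℝ, 0 ≤ u →
      (F.flow x t, u) ∈ F.dom ∧ F.flow (F.flow x t) u = F.flow x (t + u) :=
    fun u hu => F.flow_add x t u (hdom t ht) (hdom (t + u) (by linarith))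
  refine ⟨F.mem_of_dom (x, t) (hdom t ht), fun u hu => (hmem u hu).1, ?_⟩
  have h1 : Tendsto (fun u : ℝ => F.flow x (t + u)) atTop (nhds x₀) :=
    htend.comp (tendsto_atTop_add_const_left atTop t tendsto_id)
  refine h1.congr' ?_
  filter_upwards [eventually_ge_atTop (0 : ℝ)] with u hu
  exact ((hmem u hu).2).symm

lemma AuxFlow.flow_continuousAt (F : AuxFlow D f x₀) {z : X} {t : ℝ}
    (h : (z, t) ∈ F.dom) : ContinuousAt (fun s : ℝ => F.flow z s) t := by
  have h1 : ContinuousAt (fun p : X × ℝ => F.flow p.1 p.2) (z, t) :=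
    F.continuousOn.continuousAt (F.isOpen_dom.mem_nhds h)
  exact h1.comp ((continuous_const.prodMk continuous_id).continuousAt)

lemma AuxFlow.extend (F : AuxFlow D f x₀) {z : X} {T : ℝ} (hT : 0 ≤ T)
    (hzT : (z, T) ∈ F.dom) (hb : F.flow z T ∈ F.basin) : z ∈ F.basin := by
  classical
  have hzD : z ∈ D := F.dom_subset (z, T) hzT
  set w := F.flow z T with hw
  have hwD : w ∈ D := F.mem_of_dom (z, T) hzT
  have hIcc : ∀ s ∈ Icc (0 : ℝ) T, (z, s) ∈ F.dom := fun s hs =>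
    (F.interval z hzD).out (F.zero_mem z hzD) hzT hs
  set ψ : ℝ → X := fun s => if s ≤ T then F.flow z s else F.flow w (s - T) with hψ
  have hwdom : ∀ u : ℝ, 0 ≤ u → (w, u) ∈ F.dom := hb.2.1
  -- continuity on Icc 0 T
  have hc1 : ContinuousOn ψ (Icc 0 T) := by
    have : ContinuousOn (fun s => F.flow z s) (Icc 0 T) := by
      refine F.continuousOn.comp ((continuous_const.prodMk continuous_id).continuousOn) ?_
      exact fun s hs => hIcc s hs
    exact this.congr (fun s hs => by simp [hψ, hs.2])
  -- on Ici T, ψ agrees with s ↦ flow w (s - T)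
  have hψT : ∀ s ∈ Ici T, ψ s = F.flow w (s - T) := by
    intro s hs
    by_cases h : s ≤ T
    · have hsT : s = T := le_antisymm h hs
      simp [hψ, hsT, F.flow_zero w hwD]
      exact hw.symm
    · simp [hψ, h]
  have hc2 : ContinuousOn ψ (Ici T) := by
    have : ContinuousOn (fun s => F.flow w (s - T)) (Ici T) := by
      refine F.continuousOn.comp
        ((continuous_const.prodMk (continuous_id.sub continuous_const)).continuousOn) ?_
      exact fun s hs => hwdom (s - T) (by simpa using hs)
    exact this.congr hψT
  have hcont : ContinuousOn ψ (Ici 0) := by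
    rw [← Icc_union_Ici_eq_Ici hT]
    exact continuousOn_union_of_isClosed' isClosed_Icc isClosed_Ici hc1 hc2
  have hψ0 : ψ 0 = z := by simp [hψ, hT, F.flow_zero z hzD]
  have hfw : f w - f x₀ = Real.exp (-T) • (f z - f x₀) := by
    have := F.lifts (z, T) hzT
    simp only at this
    rw [hw, this]; abel
  have hprops : ∀ t ∈ Ici (0 : ℝ), ψ t ∈ D ∧
      f (ψ t) = f x₀ + Real.exp (-t) • (f z - f x₀) := by
    intro t ht
    by_cases h : t ≤ T
    · have hd := hIcc t ⟨ht, h⟩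
      exact ⟨by simpa [hψ, h] using F.mem_of_dom (z, t) hd,
        by simpa [hψ, h] using F.lifts (z, t) hd⟩
    · have hTt : T ≤ t := le_of_not_ge h
      have hd := hwdom (t - T) (by linarith)
      refine ⟨by simpa [hψ, h] using F.mem_of_dom (w, t - T) hd, ?_⟩
      have hl := F.lifts (w, t - T) hd
      simp only at hl
      have : ψ t = F.flow w (t - T) := by simp [hψ, h]
      rw [this, hl, hfw, smul_smul, ← Real.exp_add]
      ring_nf
  have hmax := F.maximal z hzD (Ici 0) Set.ordConnected_Ici (self_mem_Ici)
    ψ hcont hψ0 hprops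
  refine ⟨hzD, fun t ht => (hmax t ht).1, ?_⟩
  have hbase : Tendsto (fun s : ℝ => F.flow w (s - T)) atTop (nhds x₀) := by
    refine hb.2.2.comp ?_
    simpa [sub_eq_add_neg] using tendsto_atTop_add_const_right atTop (-T) tendsto_id
  refine hbase.congr' ?_
  filter_upwards [eventually_ge_atTop (max T 0)] with s hs
  have hs0 : (0 : ℝ) ≤ s := le_trans (le_max_right T 0) hs
  have hsT : T ≤ s := le_trans (le_max_left T 0) hs
  rw [← hψT s hsT, (hmax s hs0).2]

end Helpers

/-- The attraction basin `𝒜` of `x₀` is open, contains `x₀`, `f` is injective on `𝒜`,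
and `f(𝒜)` is star-shaped with respect to `y₀ = f(x₀)`. -/
theorem basin_open_injOn_starShaped {X Y : Type*}
    [NormedAddCommGroup X] [NormedSpace ℝ X] [CompleteSpace X]
    [NormedAddCommGroup Y] [NormedSpace ℝ Y] [CompleteSpace Y]
    (D : Set X) (hDopen : IsOpen D) (hDne : D.Nonempty) (hDconn : IsConnected D)
    (f : X → Y) (hf : IsLocalHomeoOn f D) (x₀ : X) (hx₀ : x₀ ∈ D)
    (F : AuxFlow D f x₀) :
    IsOpen F.basin ∧ x₀ ∈ F.basin ∧ Set.InjOn f F.basin ∧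
      ∀ y ∈ f '' F.basin, ∀ s ∈ Set.Icc (0 : ℝ) 1,
        f x₀ + s • (y - f x₀) ∈ f '' F.basin := by
  obtain ⟨U, hUD, hUo, hx₀U, hfUo, hfc, g, hgc, hgf, hfg⟩ := hf x₀ hx₀
  have hx₀b : x₀ ∈ F.basin := F.x0_mem_basin hx₀
  have hfx₀U : f x₀ ∈ f '' U := ⟨x₀, hx₀U, rfl⟩
  obtain ⟨r, hr, hball⟩ := Metric.isOpen_iff.mp hfUo (f x₀) hfx₀U
  -- the good neighbourhood W of x₀
  set W : Set X := {z | z ∈ U ∧ f z ∈ Metric.ball (f x₀) r} with hWdef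
  have hWo : IsOpen W := by
    rw [isOpen_iff_mem_nhds]
    intro z hz
    have hcz : ContinuousAt f z := hfc.continuousAt (hUo.mem_nhds hz.1)
    filter_upwards [hUo.mem_nhds hz.1,
      hcz.preimage_mem_nhds (Metric.isOpen_ball.mem_nhds hz.2)] with a h1 h2
    exact ⟨h1, h2⟩
  have hx₀W : x₀ ∈ W := ⟨hx₀U, Metric.mem_ball_self hr⟩
  -- W is contained in the basin
  have hWb : W ⊆ F.basin := by
    intro z hz
    set ψ : ℝ → X := fun t => g (f x₀ + Real.exp (-t) • (f z - f x₀)) with hψdef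
    have hyball : ∀ t : ℝ, 0 ≤ t →
        f x₀ + Real.exp (-t) • (f z - f x₀) ∈ Metric.ball (f x₀) r := by
      intro t ht
      rw [Metric.mem_ball, dist_eq_norm]
      have h1 : ‖f x₀ + Real.exp (-t) • (f z - f x₀) - f x₀‖
          = Real.exp (-t) * ‖f z - f x₀‖ := by
        rw [add_sub_cancel_left, norm_smul, Real.norm_eq_abs,
          abs_of_pos (Real.exp_pos _)]
      rw [h1]
      have h2 : Real.exp (-t) ≤ 1 := Real.exp_le_one_iff.mpr (by linarith)
      have h3 : ‖f z - f x₀‖ < r := by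
        have := hz.2; rwa [Metric.mem_ball, dist_eq_norm] at this
      calc Real.exp (-t) * ‖f z - f x₀‖ ≤ 1 * ‖f z - f x₀‖ :=
            mul_le_mul_of_nonneg_right h2 (norm_nonneg _)
        _ = ‖f z - f x₀‖ := one_mul _
        _ < r := h3
    have hyU : ∀ t : ℝ, 0 ≤ t → f x₀ + Real.exp (-t) • (f z - f x₀) ∈ f '' U :=
      fun t ht => hball (hyball t ht)
    have hψcont : ContinuousOn ψ (Ici 0) := by
      refine hgc.comp ?_ (fun t ht => hyU t ht)
      exact (continuous_const.add ((Real.continuous_exp.comp continuous_neg).smul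
        continuous_const)).continuousOn
    have hψ0 : ψ 0 = z := by
      simp only [hψdef, neg_zero, Real.exp_zero, one_smul, add_sub_cancel]
      exact hgf z hz.1
    have hprops : ∀ t ∈ Ici (0 : ℝ), ψ t ∈ D ∧
        f (ψ t) = f x₀ + Real.exp (-t) • (f z - f x₀) := by
      intro t ht
      have h := hfg _ (hyU t ht)
      exact ⟨hUD h.1, h.2⟩
    have hmax := F.maximal z (hUD hz.1) (Ici 0) Set.ordConnected_Ici self_mem_Ici
      ψ hψcont hψ0 hprops
    refine ⟨hUD hz.1, fun t ht => (hmax t ht).1, ?_⟩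
    have hyt : Tendsto (fun t : ℝ => f x₀ + Real.exp (-t) • (f z - f x₀))
        atTop (nhds (f x₀)) := by
      have h0 : Tendsto (fun t : ℝ => Real.exp (-t)) atTop (nhds 0) := by
        exact Real.tendsto_exp_atBot.comp tendsto_neg_atTop_atBot
      have := (h0.smul_const (f z - f x₀)).const_add (f x₀)
      simpa using this
    have hgx₀ : ContinuousAt g (f x₀) := hgc.continuousAt (hfUo.mem_nhds hfx₀U)
    have hψtend : Tendsto ψ atTop (nhds x₀) := by
      have := hgx₀.tendsto.comp hyt
      rwa [hgf x₀ hx₀U] at this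
    refine hψtend.congr' ?_
    filter_upwards [eventually_ge_atTop (0 : ℝ)] with t ht
    exact (hmax t ht).2
  -- Openness of the basin
  have hopen : IsOpen F.basin := by
    rw [isOpen_iff_mem_nhds]
    intro x hx
    obtain ⟨T, hTW, hT0⟩ :=
      ((hx.2.2.eventually (hWo.mem_nhds hx₀W)).and (eventually_ge_atTop 0)).exists
    have hdomxT : (x, T) ∈ F.dom := hx.2.1 T hT0
    have hcont : ContinuousAt (fun p : X × ℝ => F.flow p.1 p.2) (x, T) :=
      F.continuousOn.continuousAt (F.isOpen_dom.mem_nhds hdomxT)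
    have hc2 : ContinuousAt (fun z : X => (z, T)) x :=
      (continuous_id.prodMk continuous_const).continuousAt
    have hA : {z : X | (z, T) ∈ F.dom} ∈ nhds x :=
      hc2.preimage_mem_nhds (F.isOpen_dom.mem_nhds hdomxT)
    have hB : {z : X | F.flow z T ∈ W} ∈ nhds x := by
      have h : ContinuousAt (fun z : X => F.flow z T) x :=
        ContinuousAt.comp (g := fun p : X × ℝ => F.flow p.1 p.2)
          (f := fun z : X => (z, T)) hcont hc2
      exact h.preimage_mem_nhds (hWo.mem_nhds hTW)
    filter_upwards [hA, hB] with z hzd hzW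
    exact F.extend hT0 hzd (hWb hzW)
  -- Injectivity
  have hinj : Set.InjOn f F.basin := by
    intro x₁ h₁ x₂ h₂ hfeq
    by_contra hne
    have hflift : ∀ t : ℝ, (x₁, t) ∈ F.dom → (x₂, t) ∈ F.dom →
        f (F.flow x₁ t) = f (F.flow x₂ t) := by
      intro t hd1 hd2
      rw [F.lifts (x₁, t) hd1, F.lifts (x₂, t) hd2, hfeq]
    -- eventually both flows are in U, where f is injective
    obtain ⟨T, hT⟩ := Filter.eventually_atTop.mp
      (((h₁.2.2.eventually (hUo.mem_nhds hx₀U)).and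
        (h₂.2.2.eventually (hUo.mem_nhds hx₀U))).and (eventually_ge_atTop 0))
    have heqT : ∀ t : ℝ, T ≤ t → F.flow x₁ t = F.flow x₂ t := by
      intro t ht
      obtain ⟨⟨hU1, hU2⟩, ht0⟩ := hT t ht
      have := hflift t (h₁.2.1 t ht0) (h₂.2.1 t ht0)
      calc F.flow x₁ t = g (f (F.flow x₁ t)) := (hgf _ hU1).symm
        _ = g (f (F.flow x₂ t)) := by rw [this]
        _ = F.flow x₂ t := hgf _ hU2
    set B : Set ℝ := {t | 0 ≤ t ∧ F.flow x₁ t ≠ F.flow x₂ t} with hBdef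
    have h0B : (0 : ℝ) ∈ B := by
      refine ⟨le_refl 0, ?_⟩
      rw [F.flow_zero x₁ h₁.1, F.flow_zero x₂ h₂.1]
      exact hne
    have hBbdd : BddAbove B := by
      refine ⟨T, fun t ht => ?_⟩
      by_contra hlt
      exact ht.2 (heqT t (le_of_not_ge hlt))
    set m : ℝ := sSup B with hmdef
    have hm0 : 0 ≤ m := le_csSup hBbdd h0B
    have hd1m : (x₁, m) ∈ F.dom := h₁.2.1 m hm0
    have hd2m : (x₂, m) ∈ F.dom := h₂.2.1 m hm0
    have hc1 : ContinuousAt (fun s => F.flow x₁ s) m := F.flow_continuousAt hd1m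
    have hc2 : ContinuousAt (fun s => F.flow x₂ s) m := F.flow_continuousAt hd2m
    have hAopen : ∀ x : X, IsOpen {s : ℝ | (x, s) ∈ F.dom} := fun x =>
      F.isOpen_dom.preimage (continuous_const.prodMk continuous_id)
    by_cases heqm : F.flow x₁ m = F.flow x₂ m
    · -- flows agree at m; local injectivity beats points of B just below m
      obtain ⟨V, hVD, hVo, hmV, _, _, gV, _, hgVf, _⟩ :=
        hf (F.flow x₁ m) (F.mem_of_dom (x₁, m) hd1m)
      have hev : ∀ᶠ s in nhds m, F.flow x₁ s ∈ V ∧ F.flow x₂ s ∈ V ∧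
          (x₁, s) ∈ F.dom ∧ (x₂, s) ∈ F.dom := by
        filter_upwards [hc1.preimage_mem_nhds (hVo.mem_nhds hmV),
          hc2.preimage_mem_nhds (hVo.mem_nhds (heqm ▸ hmV)),
          (hAopen x₁).mem_nhds hd1m, (hAopen x₂).mem_nhds hd2m] with s hs1 hs2 hs3 hs4
        exact ⟨hs1, hs2, hs3, hs4⟩
      obtain ⟨ε, hε, hεball⟩ := Metric.eventually_nhds_iff.mp hev
      obtain ⟨b, hbB, hbgt⟩ := exists_lt_of_lt_csSup ⟨0, h0B⟩
        (show m - ε < m by linarith)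
      have hbm : b ≤ m := le_csSup hBbdd hbB
      have hdist : dist b m < ε := by
        rw [Real.dist_eq, abs_of_nonpos (by linarith)]
        linarith
      obtain ⟨hV1, hV2, hd1, hd2⟩ := hεball hdist
      have := hflift b hd1 hd2
      exact hbB.2 (by
        calc F.flow x₁ b = gV (f (F.flow x₁ b)) := (hgVf _ hV1).symm
          _ = gV (f (F.flow x₂ b)) := by rw [this]
          _ = F.flow x₂ b := hgVf _ hV2)
    · -- flows differ at m; they differ slightly above m, contradicting sSup
      have hmB : m ∈ B := ⟨hm0, heqm⟩
      have hev : ∀ᶠ s in nhds m, F.flow x₁ s ≠ F.flow x₂ s := by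
        have hp : ContinuousAt (fun s => (F.flow x₁ s, F.flow x₂ s)) m := hc1.prodMk hc2
        have hne' : (F.flow x₁ m, F.flow x₂ m) ∈ {p : X × X | p.1 ≠ p.2} := heqm
        have hopen' : IsOpen {p : X × X | p.1 ≠ p.2} := isOpen_ne_fun continuous_fst continuous_snd
        exact hp.preimage_mem_nhds (hopen'.mem_nhds hne')
      obtain ⟨ε, hε, hεball⟩ := Metric.eventually_nhds_iff.mp hev
      have hsB : m + ε / 2 ∈ B := by
        refine ⟨by linarith, hεball ?_⟩
        rw [Real.dist_eq, abs_of_nonneg (by linarith)]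
        linarith
      have := le_csSup hBbdd hsB
      linarith
  refine ⟨hopen, hx₀b, hinj, ?_⟩
  -- star-shapedness
  rintro y ⟨x, hx, rfl⟩ s ⟨hs0, hs1⟩
  rcases eq_or_lt_of_le hs0 with hs | hs
  · refine ⟨x₀, hx₀b, ?_⟩
    simp [← hs]
  · set t : ℝ := -Real.log s with htdef
    have ht0 : 0 ≤ t := by
      have := Real.log_nonpos (le_of_lt hs) hs1
      simp only [htdef]; linarith
    refine ⟨F.flow x t, F.forward hx ht0, ?_⟩
    rw [F.lifts (x, t) (hx.2.1 t ht0)]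
    simp only [htdef, neg_neg, Real.exp_log hs]
end

section
/- Let X and Y be Banach spaces, D ⊆ X a nonempty open connected set, f : D → Y a local homeomorphism, x₀ ∈ D, and let (D_Φ, Φ) be the maximal auxiliary flow for f at x₀. Then f is a homeomorphism of D onto Y if and only if D_Φ = D × ℝ, i.e. if and only if Φ is a global dynamical system on D. -/
open Set Filter

/-!
If `f` is a homeomorphism, `t ↦ f⁻¹(f x₀ + e^{-t}(f x - f x₀))` is a lifting defined for all
times, so maximality forces `D_Φ = D × ℝ`.

Conversely, let `g` be a continuous local inverse of `f` on a ball `B` around `f x₀`. By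
uniqueness of liftings, an orbit that once enters the chart `g(B)` coincides with
`g(f x₀ + e^{-s}(f x - f x₀))` at every time `s` at which this point of `Y` lies in `B`; this
identity passes to limits, so the points whose orbit enters `g(B)` form a nonempty, open and
relatively closed subset of the connected set `D`, i.e. all of `D`. Hence two points with the
same image have the same orbit from some time on, and flowing back shows they are equal. Every
`y` is attained by flowing `g(f x₀ + e^{-t}(y - f x₀))` back for time `t`.
-/

open Topology Metric

section LocalHomeo

variable {X Y : Type*} [TopologicalSpace X] [TopologicalSpace Y] {f : X → Y} {D : Set X}

theorem IsLocalHomeoOn.isOpen (hf : IsLocalHomeoOn f D) : IsOpen D :=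
  isOpen_iff_forall_mem_open.mpr fun x hx =>
    let ⟨U, hUD, hU, hxU, _⟩ := hf x hx
    ⟨U, hUD, hU, hxU⟩

theorem IsLocalHomeoOn.continuousOn (hf : IsLocalHomeoOn f D) : ContinuousOn f D := by
  intro x hx
  obtain ⟨U, -, hU, hxU, -, hfU, -⟩ := hf x hx
  exact (hfU.continuousAt (hU.mem_nhds hxU)).continuousWithinAt

theorem IsLocalHomeoOn.isOpen_image (hf : IsLocalHomeoOn f D) {S : Set X} (hS : IsOpen S)
    (hSD : S ⊆ D) : IsOpen (f '' S) := by
  rw [isOpen_iff_forall_mem_open]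
  rintro y ⟨x, hxS, rfl⟩
  obtain ⟨U, -, hU, hxU, hfU, -, g, hg, hgf, hfg⟩ := hf x (hSD hxS)
  refine ⟨f '' (S ∩ U), image_mono inter_subset_left, ?_, ⟨x, ⟨hxS, hxU⟩, rfl⟩⟩
  have himage : f '' (S ∩ U) = f '' U ∩ g ⁻¹' (S ∩ U) := by
    ext z
    constructor
    · rintro ⟨u, hu, rfl⟩
      exact ⟨⟨u, hu.2, rfl⟩, by rw [mem_preimage, hgf u hu.2]; exact hu⟩
    · rintro ⟨hzU, hzg⟩
      exact ⟨g z, hzg, (hfg z hzU).2⟩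
  rw [himage]
  exact hg.isOpen_inter_preimage hfU (hS.inter hU)

theorem IsLocalHomeoOn.isOpenMap_domRestrict (hf : IsLocalHomeoOn f D) :
    IsOpenMap (D.domRestrict f) := by
  intro O hO
  rw [show D.domRestrict f = f ∘ Subtype.val from rfl, image_comp]
  exact hf.isOpen_image (hf.isOpen.isOpenMap_subtype_val O hO) (Subtype.coe_image_subset D O)

theorem IsLocalHomeoOn.exists_homeomorph (hf : IsLocalHomeoOn f D) (hinj : InjOn f D)
    (hsurj : SurjOn f D univ) : ∃ h : D ≃ₜ Y, ∀ x : D, h x = f x :=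
  ⟨(Equiv.ofBijective _ ⟨injOn_iff_injective.mp hinj, surjOn_iff_surjective.mp hsurj⟩)
    |>.toHomeomorphOfContinuousOpen (continuousOn_iff_continuous_domRestrict.mp hf.continuousOn)
      hf.isOpenMap_domRestrict, fun _ => rfl⟩

structure IsBallChart {Y : Type*} [PseudoMetricSpace Y] (f : X → Y) (g : Y → X) (V : Set X)
    (y₀ : Y) (ε : ℝ) : Prop where
  isOpen : IsOpen V
  mapsTo : MapsTo f V (ball y₀ ε)
  mapsTo_inv : MapsTo g (ball y₀ ε) V
  leftInvOn : LeftInvOn g f V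
  rightInvOn : RightInvOn g f (ball y₀ ε)
  continuousOn_inv : ContinuousOn g (ball y₀ ε)

theorem IsLocalHomeoOn.exists_isBallChart {Y : Type*} [PseudoMetricSpace Y] {f : X → Y}
    (hf : IsLocalHomeoOn f D) {x : X} (hx : x ∈ D) :
    ∃ V ⊆ D, x ∈ V ∧ ∃ g ε, IsBallChart f g V (f x) ε := by
  obtain ⟨U, hUD, hU, hxU, hfU, hf, g, hg, hgf, hfg⟩ := hf x hx
  obtain ⟨ε, hε, hB⟩ := isOpen_iff.mp hfU (f x) (mem_image_of_mem f hxU)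
  refine ⟨U ∩ f ⁻¹' ball (f x) ε, inter_subset_left.trans hUD, ⟨hxU, mem_ball_self hε⟩, g, ε,
    hf.isOpen_inter_preimage hU isOpen_ball, fun _ h => h.2, fun y hy => ⟨(hfg y (hB hy)).1, ?_⟩,
    fun x hx => hgf x hx.1, fun y hy => (hfg y (hB hy)).2, hg.mono hB⟩
  rw [mem_preimage, (hfg y (hB hy)).2]
  exact hy

end LocalHomeo

section ExpRay

variable {Y : Type*} [NormedAddCommGroup Y] [NormedSpace ℝ Y]

/-- The path in `Y` that the orbit `t ↦ Φ(x, t)` lifts, with `y = f x` and `y₀ = f x₀`. -/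
noncomputable def expRay (y₀ y : Y) (t : ℝ) : Y := y₀ + Real.exp (-t) • (y - y₀)

theorem expRay_zero (y₀ y : Y) : expRay y₀ y 0 = y := by
  simp [expRay]

theorem expRay_expRay (y₀ y : Y) (s t : ℝ) :
    expRay y₀ (expRay y₀ y s) t = expRay y₀ y (s + t) := by
  simp only [expRay, add_sub_cancel_left, smul_smul, ← Real.exp_add, neg_add_rev, add_comm (-t)]

theorem dist_expRay (y₀ y : Y) (t : ℝ) :
    dist (expRay y₀ y t) y₀ = Real.exp (-t) * ‖y - y₀‖ := by
  rw [expRay, dist_eq_norm, add_sub_cancel_left, norm_smul,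
    Real.norm_of_nonneg (Real.exp_pos _).le]

theorem continuous_expRay (y₀ y : Y) : Continuous (expRay y₀ y) := by
  unfold expRay
  fun_prop

theorem continuous_expRay_left (y₀ : Y) (t : ℝ) : Continuous fun y => expRay y₀ y t := by
  unfold expRay
  fun_prop

theorem tendsto_expRay_atTop (y₀ y : Y) : Tendsto (expRay y₀ y) atTop (𝓝 y₀) := by
  have h := (Real.tendsto_exp_neg_atTop_nhds_zero.smul_const (y - y₀)).const_add y₀
  rwa [zero_smul, add_zero] at h

theorem ordConnected_expRay_preimage_ball (y₀ y : Y) (ε : ℝ) :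
    (expRay y₀ y ⁻¹' ball y₀ ε).OrdConnected := by
  refine IsUpperSet.ordConnected fun s t hst hs => ?_
  rw [mem_preimage, mem_ball, dist_expRay] at hs ⊢
  exact lt_of_le_of_lt (by gcongr) hs

end ExpRay

namespace AuxFlow

variable {X Y : Type*} [NormedAddCommGroup X] [NormedSpace ℝ X]
  [NormedAddCommGroup Y] [NormedSpace ℝ Y] {D : Set X} {f : X → Y} {x₀ : X}
  (F : AuxFlow D f x₀)

theorem apply_flow {x : X} {t : ℝ} (h : (x, t) ∈ F.dom) :
    f (F.flow x t) = expRay (f x₀) (f x) t :=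
  F.lifts _ h

theorem dom_eq_prod_of_homeomorph (h : D ≃ₜ Y) (hh : ∀ x : D, h x = f x) :
    F.dom = D ×ˢ univ := by
  refine Subset.antisymm (fun p hp => ⟨F.dom_subset p hp, trivial⟩) ?_
  rintro ⟨x, t⟩ ⟨hx, -⟩
  let ψ : ℝ → X := fun s => h.symm (expRay (f x₀) (f x) s)
  have hψ : Continuous ψ :=
    continuous_subtype_val.comp (h.symm.continuous.comp (continuous_expRay _ _))
  have hψ_zero : ψ 0 = x := by
    simp only [ψ, expRay_zero, ← hh ⟨x, hx⟩, h.symm_apply_apply]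
  have hfψ (s : ℝ) : f (ψ s) = expRay (f x₀) (f x) s := by
    rw [← hh, h.apply_symm_apply]
  exact (F.maximal x hx univ ordConnected_univ trivial ψ hψ.continuousOn hψ_zero
    (fun s _ => ⟨(h.symm _).2, hfψ s⟩) t trivial).1

-- Maximality of `Φ`, applied to the lifting `g ∘ expRay (f x₀) (f y)` on the interval of times
-- at which the path stays in the ball.
theorem flow_eq_of_mem_ball {g : Y → X} {V : Set X} {ε : ℝ} (hc : IsBallChart f g V (f x₀) ε)
    (hVD : V ⊆ D) {y : X} (hy : y ∈ V) {t : ℝ} (ht : expRay (f x₀) (f y) t ∈ ball (f x₀) ε) :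
    F.flow y t = g (expRay (f x₀) (f y) t) := by
  have hzero : (0 : ℝ) ∈ expRay (f x₀) (f y) ⁻¹' ball (f x₀) ε := by
    rw [mem_preimage, expRay_zero]
    exact hc.mapsTo hy
  have hψ_zero : (g ∘ expRay (f x₀) (f y)) 0 = y := by
    rw [Function.comp_apply, expRay_zero, hc.leftInvOn hy]
  have hψ : ContinuousOn (g ∘ expRay (f x₀) (f y)) (expRay (f x₀) (f y) ⁻¹' ball (f x₀) ε) :=
    hc.continuousOn_inv.comp (continuous_expRay _ _).continuousOn (mapsTo_preimage _ _)
  exact (F.maximal y (hVD hy) _ (ordConnected_expRay_preimage_ball _ _ _) hzero _ hψ hψ_zero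
    (fun s hs => ⟨hVD (hc.mapsTo_inv hs), hc.rightInvOn hs⟩) t ht).2.symm

section Global

variable {F}

theorem mem_dom (hF : F.dom = D ×ˢ univ) {x : X} (hx : x ∈ D) (t : ℝ) : (x, t) ∈ F.dom :=
  hF ▸ ⟨hx, trivial⟩

theorem flow_flow (hF : F.dom = D ×ˢ univ) {x : X} (hx : x ∈ D) (s t : ℝ) :
    F.flow (F.flow x s) t = F.flow x (s + t) :=
  (F.flow_add x s t (mem_dom hF hx s) (mem_dom hF hx _)).2

theorem flow_flow_neg (hF : F.dom = D ×ˢ univ) {x : X} (hx : x ∈ D) (s : ℝ) :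
    F.flow (F.flow x s) (-s) = x := by
  rw [flow_flow hF hx, add_neg_cancel, F.flow_zero x hx]

theorem continuousOn_flow (hF : F.dom = D ×ˢ univ) (t : ℝ) : ContinuousOn (F.flow · t) D :=
  F.continuousOn.comp (continuousOn_id.prodMk continuousOn_const) fun _ hx => mem_dom hF hx t

theorem surjOn_univ (hF : F.dom = D ×ˢ univ) (hD : f '' D ∈ 𝓝 (f x₀)) : SurjOn f D univ := by
  intro y _
  obtain ⟨t, x, hx, hxt⟩ := ((tendsto_expRay_atTop (f x₀) y).eventually hD).exists
  refine ⟨F.flow x (-t), F.mem_of_dom _ (mem_dom hF hx _), ?_⟩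
  rw [F.apply_flow (mem_dom hF hx _), hxt, expRay_expRay, add_neg_cancel, expRay_zero]

variable (F) in
def enteringSet (V : Set X) : Set X := {x ∈ D | ∃ T, F.flow x T ∈ V}

theorem flow_eq_of_mem_enteringSet (hF : F.dom = D ×ˢ univ) {g : Y → X} {V : Set X} {ε : ℝ}
    (hc : IsBallChart f g V (f x₀) ε) (hVD : V ⊆ D) {x : X} (hx : x ∈ F.enteringSet V) {s : ℝ}
    (hs : expRay (f x₀) (f x) s ∈ ball (f x₀) ε) :
    F.flow x s = g (expRay (f x₀) (f x) s) := by
  obtain ⟨hxD, T, hT⟩ := hx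
  have hpath : expRay (f x₀) (f (F.flow x T)) (s - T) = expRay (f x₀) (f x) s := by
    rw [F.apply_flow (mem_dom hF hxD T), expRay_expRay, add_sub_cancel]
  have hshift : F.flow x s = F.flow (F.flow x T) (s - T) := by
    rw [flow_flow hF hxD, add_sub_cancel]
  rw [hshift, ← hpath]
  exact F.flow_eq_of_mem_ball hc hVD hT (hpath ▸ hs)

theorem isOpen_enteringSet (hF : F.dom = D ×ˢ univ) (hD : IsOpen D) {V : Set X}
    (hV : IsOpen V) : IsOpen (F.enteringSet V) := by
  have h : F.enteringSet V = ⋃ T, D ∩ (F.flow · T) ⁻¹' V := by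
    ext x
    simp only [enteringSet, mem_ofPred_eq, mem_iUnion, mem_inter_iff, mem_preimage,
      exists_and_left]
  rw [h]
  exact isOpen_iUnion fun T => (continuousOn_flow hF T).isOpen_inter_preimage hD hV

-- Near `x`, both sides of `flow_eq_of_mem_enteringSet` at a fixed time `s` are continuous,
-- so the identity extends from `enteringSet` to its closure and puts `Φ(x, s)` into `V`.
theorem closure_enteringSet_inter_subset (hF : F.dom = D ×ˢ univ) (hD : IsOpen D)
    (hfD : ContinuousOn f D) {g : Y → X} {V : Set X} {ε : ℝ} (hc : IsBallChart f g V (f x₀) ε)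
    (hVD : V ⊆ D) (hε : 0 < ε) : closure (F.enteringSet V) ∩ D ⊆ F.enteringSet V := by
  set A := F.enteringSet V
  rintro x ⟨hxA, hx⟩
  obtain ⟨s, hs⟩ := ((tendsto_expRay_atTop (f x₀) (f x)).eventually (ball_mem_nhds _ hε)).exists
  have hpath : ContinuousOn (fun a => expRay (f x₀) (f a) s) D :=
    (continuous_expRay_left _ s).comp_continuousOn hfD
  set W := D ∩ (fun a => expRay (f x₀) (f a) s) ⁻¹' ball (f x₀) ε
  have hW : IsOpen W := hpath.isOpen_inter_preimage hD isOpen_ball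
  have hgW : ContinuousOn (fun a => g (expRay (f x₀) (f a) s)) W :=
    hc.continuousOn_inv.comp (hpath.mono inter_subset_left) fun _ ha => ha.2
  have heq : EqOn (F.flow · s) (fun a => g (expRay (f x₀) (f a) s)) (W ∩ closure (A ∩ W)) :=
    EqOn.of_subset_closure (fun a ha => flow_eq_of_mem_enteringSet hF hc hVD ha.1 ha.2.2)
      ((continuousOn_flow hF s).mono fun _ ha => ha.1.1) (hgW.mono inter_subset_left)
      (fun a ha => ⟨ha.2, subset_closure ha⟩) inter_subset_right
  have hxW : x ∈ W ∩ closure (A ∩ W) :=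
    ⟨⟨hx, hs⟩, inter_comm W A ▸ hW.inter_closure ⟨⟨hx, hs⟩, hxA⟩⟩
  refine ⟨hx, s, ?_⟩
  rw [show F.flow x s = _ from heq hxW]
  exact hc.mapsTo_inv hs

theorem eventually_flow_eq (hF : F.dom = D ×ˢ univ) (hD : IsPreconnected D) (hDo : IsOpen D)
    (hfD : ContinuousOn f D) {g : Y → X} {V : Set X} {ε : ℝ} (hc : IsBallChart f g V (f x₀) ε)
    (hVD : V ⊆ D) (hx₀ : x₀ ∈ V) {x : X} (hx : x ∈ D) :
    ∀ᶠ s in atTop, F.flow x s = g (expRay (f x₀) (f x) s) := by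
  have hε : 0 < ε := by simpa using hc.mapsTo hx₀
  have hx₀A : x₀ ∈ F.enteringSet V := ⟨hVD hx₀, 0, by rwa [F.flow_zero x₀ (hVD hx₀)]⟩
  have hDA : D ⊆ F.enteringSet V :=
    hD.subset_of_closure_inter_subset (isOpen_enteringSet hF hDo hc.isOpen)
      ⟨x₀, hVD hx₀, hx₀A⟩ (closure_enteringSet_inter_subset hF hDo hfD hc hVD hε)
  filter_upwards [(tendsto_expRay_atTop (f x₀) (f x)).eventually (ball_mem_nhds _ hε)]
    with s hs using flow_eq_of_mem_enteringSet hF hc hVD (hDA hx) hs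

theorem injOn (hF : F.dom = D ×ˢ univ) (hD : IsPreconnected D) (hf : IsLocalHomeoOn f D)
    (hx₀ : x₀ ∈ D) : InjOn f D := by
  obtain ⟨V, hVD, hx₀V, g, ε, hc⟩ := hf.exists_isBallChart hx₀
  have hflow (x : X) (hx : x ∈ D) :=
    eventually_flow_eq hF hD hf.isOpen hf.continuousOn hc hVD hx₀V hx
  intro a ha b hb hab
  obtain ⟨s, hsa, hsb⟩ := ((hflow a ha).and (hflow b hb)).exists
  rw [← flow_flow_neg hF ha s, ← flow_flow_neg hF hb s, hsa, hsb, hab]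

end Global

end AuxFlow

theorem homeomorph_iff_global_flow_general {X Y : Type*}
    [NormedAddCommGroup X] [NormedSpace ℝ X]
    [NormedAddCommGroup Y] [NormedSpace ℝ Y]
    (D : Set X) (hDconn : IsConnected D)
    (f : X → Y) (hf : IsLocalHomeoOn f D) (x₀ : X) (hx₀ : x₀ ∈ D)
    (F : AuxFlow D f x₀) :
    (∃ h : D ≃ₜ Y, ∀ x : D, h x = f x.1) ↔ F.dom = D ×ˢ (Set.univ : Set ℝ) := by
  refine ⟨fun ⟨h, hh⟩ => F.dom_eq_prod_of_homeomorph h hh, fun hF => ?_⟩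
  have hfD : f '' D ∈ 𝓝 (f x₀) :=
    (hf.isOpen_image hf.isOpen subset_rfl).mem_nhds (mem_image_of_mem f hx₀)
  exact hf.exists_homeomorph (F.injOn hF hDconn.isPreconnected hf hx₀) (F.surjOn_univ hF hfD)

/-- `f` is a homeomorphism of `D` onto `Y` if and only if the maximal auxiliary flow is
a global dynamical system, i.e. `D_Φ = D × ℝ`. -/
theorem homeomorph_iff_global_flow {X Y : Type*}
    [NormedAddCommGroup X] [NormedSpace ℝ X] [CompleteSpace X]
    [NormedAddCommGroup Y] [NormedSpace ℝ Y] [CompleteSpace Y]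
    (D : Set X) (hDopen : IsOpen D) (hDne : D.Nonempty) (hDconn : IsConnected D)
    (f : X → Y) (hf : IsLocalHomeoOn f D) (x₀ : X) (hx₀ : x₀ ∈ D)
    (F : AuxFlow D f x₀) :
    (∃ h : D ≃ₜ Y, ∀ x : D, h x = f x.1) ↔ F.dom = D ×ˢ (Set.univ : Set ℝ) :=
  homeomorph_iff_global_flow_general D hDconn f hf x₀ hx₀ F
end

section
/- Let X and Y be Banach spaces, D ⊆ X a nonempty open connected set, f : D → Y a local homeomorphism, x₀ ∈ D, y₀ = f(x₀), let (D_Φ, Φ) be the maximal auxiliary flow for f at x₀, and let 𝒜 be the attraction basin of x₀, 𝒜 = {x ∈ D : [0,∞) ⊆ I_x and Φ(x,t) → x₀ as t → +∞}. Then: (i) f(∂𝒜) ⊆ ∂f(𝒜), where ∂𝒜 is the boundary of 𝒜 in D; (ii) both 𝒜 and ∂𝒜 are invariant under Φ (if x lies in the set and (x,t) ∈ D_Φ then Φ(x,t) lies in the set); and (iii) for every x ∈ ∂𝒜 the forward trajectory through x is not global: sup I_x < +∞. -/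
/-!
Because `Φ(Φ(x,t),-t) = x`, trajectories can be flowed back: this makes the basin `𝒜` invariant
in both time directions and `f` injective on `𝒜`. Near `x₀` the flow is a chart inverse of `f`
applied to a segment shrinking to `f(x₀)`, so `𝒜` is a neighbourhood of `x₀` and, by backward
invariance, open. An injective local homeomorphism on an open set cannot map a boundary point
into the image of the set, which gives (i); a global forward trajectory from `∂𝒜` would have
images converging to `f(x₀)`, inside the open set `f(𝒜)`, contradicting (i).
-/

open Set Filter

open Topology

namespace IsLocalHomeoOn

variable {X Y : Type*} [TopologicalSpace X] [TopologicalSpace Y] {f : X → Y} {D : Set X}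

theorem continuousAt (hf : IsLocalHomeoOn f D) {x : X} (hx : x ∈ D) : ContinuousAt f x := by
  obtain ⟨U, -, hU, hxU, -, hfU, -⟩ := hf x hx
  exact hfU.continuousAt (hU.mem_nhds hxU)

theorem exists_mem_nhds_injOn (hf : IsLocalHomeoOn f D) {x : X} (hx : x ∈ D) :
    ∃ U ∈ 𝓝 x, InjOn f U := by
  obtain ⟨U, -, hU, hxU, -, -, g, -, hgf, -⟩ := hf x hx
  exact ⟨U, hU.mem_nhds hxU, LeftInvOn.injOn (f₁' := g) hgf⟩

theorem isOpen_image_s13 (hf : IsLocalHomeoOn f D) {A : Set X} (hA : IsOpen A) (hAD : A ⊆ D) :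
    IsOpen (f '' A) := by
  rw [isOpen_iff_forall_mem_open]
  rintro _ ⟨x, hxA, rfl⟩
  obtain ⟨U, -, hU, hxU, hfU, -, g, hg, hgf, hfg⟩ := hf x (hAD hxA)
  refine ⟨f '' U ∩ g ⁻¹' (A ∩ U), ?_, hg.isOpen_inter_preimage hfU (hA.inter hU), ?_⟩
  · rintro y ⟨hyU, hgy, -⟩
    exact ⟨g y, hgy, (hfg y hyU).2⟩
  · exact ⟨mem_image_of_mem f hxU, by
      simp only [mem_preimage, hgf x hxU, mem_inter_iff, hxA, hxU, and_self]⟩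

variable [T2Space X]

/-- The local inverse of `f` at the preimage `z ∈ A` of `f x` fixes the points of `A` near `x`,
hence `x = z`. -/
theorem mem_of_mem_closure_of_image_mem (hf : IsLocalHomeoOn f D) {A : Set X} (hA : IsOpen A)
    (hAD : A ⊆ D) (hinj : InjOn f A) {x : X} (hx : x ∈ closure A) (hxD : x ∈ D)
    (hfx : f x ∈ f '' A) : x ∈ A := by
  obtain ⟨z, hzA, hfz⟩ := hfx
  obtain ⟨U, -, hU, hzU, hfU, -, g, hg, hgf, hfg⟩ := hf z (hAD hzA)
  have hfxU : f x ∈ f '' U := hfz ▸ mem_image_of_mem f hzU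
  have hgfx : g (f x) = z := by rw [← hfz, hgf z hzU]
  have hcont : Tendsto (fun y => g (f y)) (𝓝 x) (𝓝 z) := hgfx ▸
    ((hg.continuousAt (hfU.mem_nhds hfxU)).comp (hf.continuousAt hxD)).tendsto
  have hfix : ∀ᶠ y in 𝓝[A] x, g (f y) = y := by
    have hgA : ∀ᶠ y in 𝓝 x, g (f y) ∈ A := hcont.eventually_mem (hA.mem_nhds hzA)
    have hfU' : ∀ᶠ y in 𝓝 x, f y ∈ f '' U := (hf.continuousAt hxD).eventually_mem
      (hfU.mem_nhds hfxU)
    filter_upwards [self_mem_nhdsWithin, nhdsWithin_le_nhds (hgA.and hfU')]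
      with y hyA ⟨hgyA, hyU⟩
    exact hinj hgyA hyA (hfg _ hyU).2
  have := mem_closure_iff_nhdsWithin_neBot.mp hx
  have hxz : x = z := tendsto_nhds_unique_of_eventuallyEq
    (tendsto_id.mono_left nhdsWithin_le_nhds)
    (hcont.mono_left nhdsWithin_le_nhds) (hfix.mono fun y hy => hy.symm)
  exact hxz ▸ hzA

theorem image_frontier_inter_subset (hf : IsLocalHomeoOn f D) {A : Set X} (hA : IsOpen A)
    (hAD : A ⊆ D) (hinj : InjOn f A) : f '' (frontier A ∩ D) ⊆ frontier (f '' A) := by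
  rintro _ ⟨x, ⟨hxA, hxD⟩, rfl⟩
  rw [hA.frontier_eq] at hxA
  rw [(hf.isOpen_image_s13 hA hAD).frontier_eq]
  exact ⟨(hf.continuousAt hxD).continuousWithinAt.mem_closure_image hxA.1,
    fun h => hxA.2 (hf.mem_of_mem_closure_of_image_mem hA hAD hinj hxA.1 hxD h)⟩

end IsLocalHomeoOn

theorem tendsto_add_exp_neg_smul_sub {E : Type*} [NormedAddCommGroup E] [NormedSpace ℝ E]
    (a b : E) : Tendsto (fun t : ℝ => a + Real.exp (-t) • (b - a)) atTop (𝓝 a) := by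
  have h : Tendsto (fun t : ℝ => Real.exp (-t) • (b - a)) atTop (𝓝 0) := by
    simpa using Real.tendsto_exp_neg_atTop_nhds_zero.smul_const (b - a)
  simpa using tendsto_const_nhds.add h

namespace AuxFlow

variable {X Y : Type*} [NormedAddCommGroup X] [NormedSpace ℝ X]
  [NormedAddCommGroup Y] [NormedSpace ℝ Y] {D : Set X} {f : X → Y} {x₀ : X}
  (F : AuxFlow D f x₀) {x : X} {s t : ℝ}

theorem map_flow (h : (x, t) ∈ F.dom) :
    f (F.flow x t) = f x₀ + Real.exp (-t) • (f x - f x₀) :=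
  F.lifts (x, t) h

theorem continuousAt_flow_left (h : (x, t) ∈ F.dom) : ContinuousAt (F.flow · t) x :=
  (F.continuousOn.continuousAt (F.isOpen_dom.mem_nhds h)).comp (f := (·, t))
    (Continuous.prodMk_left t).continuousAt

theorem eventually_mem_dom (h : (x, t) ∈ F.dom) : ∀ᶠ y in 𝓝 x, (y, t) ∈ F.dom :=
  (Continuous.prodMk_left t).continuousAt.eventually_mem (F.isOpen_dom.mem_nhds h)

theorem flow_flow_neg_s13 (h : (x, t) ∈ F.dom) :
    (F.flow x t, -t) ∈ F.dom ∧ F.flow (F.flow x t) (-t) = x := by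
  have hx : x ∈ D := F.dom_subset _ h
  obtain ⟨hdom, hflow⟩ := F.flow_add x t (-t) h (by simpa using F.zero_mem x hx)
  exact ⟨hdom, by rw [hflow, add_neg_cancel, F.flow_zero x hx]⟩

/-- The converse of the flow law `flow_add`, obtained by flowing back from `Φ(x,t)` to `x`. -/
theorem mem_dom_add_of_flow (h : (x, t) ∈ F.dom) (hs : (F.flow x t, s) ∈ F.dom) :
    (x, t + s) ∈ F.dom ∧ F.flow x (t + s) = F.flow (F.flow x t) s := by
  obtain ⟨hneg, hback⟩ := F.flow_flow_neg_s13 h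
  obtain ⟨hdom, hflow⟩ := F.flow_add _ (-t) (t + s) hneg (by simpa using hs)
  rw [hback] at hdom hflow
  exact ⟨hdom, by rw [hflow, neg_add_cancel_left]⟩

theorem flow_self (hx₀ : x₀ ∈ D) (t : ℝ) :
    (x₀, t) ∈ F.dom ∧ F.flow x₀ t = x₀ := by
  have h := F.maximal x₀ hx₀ univ ordConnected_univ (mem_univ 0) (fun _ => x₀)
    continuousOn_const rfl (fun t _ => ⟨hx₀, by simp⟩) t (mem_univ t)
  exact ⟨h.1, h.2.symm⟩

theorem mem_basin_self (hx₀ : x₀ ∈ D) : x₀ ∈ F.basin :=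
  ⟨hx₀, fun t _ => (F.flow_self hx₀ t).1,
    tendsto_const_nhds.congr fun t => (F.flow_self hx₀ t).2.symm⟩

theorem flow_mem_basin (hx : x ∈ F.basin) (ht : (x, t) ∈ F.dom) : F.flow x t ∈ F.basin := by
  obtain ⟨hxD, hdom, htend⟩ := hx
  have hshift : ∀ s, 0 ≤ s →
      (F.flow x t, s) ∈ F.dom ∧ F.flow (F.flow x t) s = F.flow x (t + s) := by
    intro s hs
    refine F.flow_add x t s ht ?_
    rcases le_total 0 (t + s) with h | h
    · exact hdom _ h
    · exact (F.interval x hxD).out ht (hdom 0 le_rfl) ⟨le_add_of_nonneg_right hs, h⟩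
  refine ⟨F.mem_of_dom _ ht, fun s hs => (hshift s hs).1, ?_⟩
  refine (htend.comp (tendsto_atTop_add_const_left atTop t tendsto_id)).congr' ?_
  filter_upwards [eventually_ge_atTop 0] with s hs
  exact (hshift s hs).2.symm

theorem mem_basin_of_flow_mem (ht : (x, t) ∈ F.dom) (hz : F.flow x t ∈ F.basin) :
    x ∈ F.basin := by
  obtain ⟨-, hzdom, hztend⟩ := hz
  have hx : x ∈ D := F.dom_subset _ ht
  have hshift : ∀ s, t ≤ s →
      (x, s) ∈ F.dom ∧ F.flow x s = F.flow (F.flow x t) (s + -t) := fun s hs => by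
    simpa [← sub_eq_add_neg] using F.mem_dom_add_of_flow ht (hzdom (s - t) (sub_nonneg.2 hs))
  refine ⟨hx, fun s hs => ?_, ?_⟩
  · rcases le_total t s with h | h
    · exact (hshift s h).1
    · exact (F.interval x hx).out (F.zero_mem x hx) ht ⟨hs, h⟩
  · refine (hztend.comp (tendsto_atTop_add_const_right atTop (-t) tendsto_id)).congr' ?_
    filter_upwards [eventually_ge_atTop t] with s hs
    exact (hshift s hs).2.symm

theorem basin_mem_nhds_self (hf : IsLocalHomeoOn f D) (hx₀ : x₀ ∈ D) :
    F.basin ∈ 𝓝 x₀ := by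
  obtain ⟨U, hUD, hU, hx₀U, hfU, -, g, hg, hgf, hfg⟩ := hf x₀ hx₀
  obtain ⟨r, hr, hball⟩ := Metric.isOpen_iff.mp hfU (f x₀) (mem_image_of_mem f hx₀U)
  have hnhds : U ∩ f ⁻¹' Metric.ball (f x₀) r ∈ 𝓝 x₀ :=
    inter_mem (hU.mem_nhds hx₀U)
      ((hf.continuousAt hx₀).preimage_mem_nhds (Metric.ball_mem_nhds _ hr))
  refine mem_of_superset hnhds fun x ⟨hxU, hxB⟩ => ?_
  set c : ℝ → Y := fun s => f x₀ + Real.exp (-s) • (f x - f x₀)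
  have hcU : MapsTo c (Ici 0) (f '' U) := fun s hs =>
    hball ((convex_ball (f x₀) r).add_smul_sub_mem (Metric.mem_ball_self hr) hxB
      ⟨(Real.exp_pos _).le, Real.exp_le_one_iff.2 (neg_nonpos.2 hs)⟩)
  have hψ : ContinuousOn (g ∘ c) (Ici 0) := hg.comp (by fun_prop) hcU
  have hmax := F.maximal x (hUD hxU) (Ici 0) ordConnected_Ici self_mem_Ici (g ∘ c) hψ
    (by simp [c, hgf x hxU]) fun s hs => ⟨hUD (hfg _ (hcU hs)).1, (hfg _ (hcU hs)).2⟩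
  refine ⟨hUD hxU, fun s hs => (hmax s hs).1, ?_⟩
  have hc : Tendsto c atTop (𝓝[f '' U] (f x₀)) :=
    tendsto_nhdsWithin_iff.2 ⟨tendsto_add_exp_neg_smul_sub _ _,
      eventually_atTop.2 ⟨0, fun s hs => hcU hs⟩⟩
  have hgc : Tendsto (g ∘ c) atTop (𝓝 x₀) :=
    hgf x₀ hx₀U ▸ (hg _ (mem_image_of_mem f hx₀U)).tendsto.comp hc
  refine hgc.congr' ?_
  filter_upwards [eventually_ge_atTop 0] with s hs
  exact (hmax s hs).2

theorem mem_interior_basin_of_flow_mem (ht : (x, t) ∈ F.dom)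
    (h : F.flow x t ∈ interior F.basin) : x ∈ interior F.basin := by
  rw [mem_interior_iff_mem_nhds]
  filter_upwards [F.eventually_mem_dom ht,
    (F.continuousAt_flow_left ht).eventually_mem (isOpen_interior.mem_nhds h)] with y hy hyt
  exact F.mem_basin_of_flow_mem hy (interior_subset hyt)

theorem isOpen_basin (hf : IsLocalHomeoOn f D) (hx₀ : x₀ ∈ D) : IsOpen F.basin := by
  refine subset_interior_iff_isOpen.1 fun x hx => ?_
  obtain ⟨T, hT, hT0⟩ := ((hx.2.2.eventually (interior_mem_nhds.2
    (F.basin_mem_nhds_self hf hx₀))).and (eventually_ge_atTop 0)).exists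
  exact F.mem_interior_basin_of_flow_mem (hx.2.1 T hT0) hT

/-- Two points of the basin with the same image have trajectories that meet in a chart of `f`
around `x₀`; flowing back from the meeting point recovers both. -/
theorem injOn_basin (hf : IsLocalHomeoOn f D) (hx₀ : x₀ ∈ D) : InjOn f F.basin := by
  intro a ha b hb hab
  obtain ⟨U, hU, hinj⟩ := hf.exists_mem_nhds_injOn hx₀
  obtain ⟨T, ⟨haU, hbU⟩, hT0⟩ :=
    (((ha.2.2.eventually hU).and (hb.2.2.eventually hU)).and (eventually_ge_atTop 0)).exists
  have haT := ha.2.1 T hT0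
  have hbT := hb.2.1 T hT0
  have hmeet : F.flow a T = F.flow b T :=
    hinj haU hbU (by rw [F.map_flow haT, F.map_flow hbT, hab])
  calc a = F.flow (F.flow a T) (-T) := (F.flow_flow_neg_s13 haT).2.symm
    _ = F.flow (F.flow b T) (-T) := by rw [hmeet]
    _ = b := (F.flow_flow_neg_s13 hbT).2

theorem flow_mem_closure_basin (hx : x ∈ closure F.basin) (ht : (x, t) ∈ F.dom) :
    F.flow x t ∈ closure F.basin := by
  have := mem_closure_iff_nhdsWithin_neBot.mp hx
  refine mem_closure_of_tendsto (b := 𝓝[F.basin] x)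
    ((F.continuousAt_flow_left ht).mono_left nhdsWithin_le_nhds) ?_
  filter_upwards [self_mem_nhdsWithin, nhdsWithin_le_nhds (F.eventually_mem_dom ht)]
    with y hy hyt
  exact F.flow_mem_basin hy hyt

theorem flow_mem_frontier_basin (hx : x ∈ frontier F.basin) (ht : (x, t) ∈ F.dom) :
    F.flow x t ∈ frontier F.basin :=
  ⟨F.flow_mem_closure_basin hx.1 ht, fun h => hx.2 (F.mem_interior_basin_of_flow_mem ht h)⟩

theorem bddAbove_dom_of_mem_frontier_basin (hf : IsLocalHomeoOn f D) (hx₀ : x₀ ∈ D)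
    (hx : x ∈ frontier F.basin) (hxD : x ∈ D) : BddAbove {t : ℝ | (x, t) ∈ F.dom} := by
  by_contra hunb
  have hdom : ∀ t, 0 ≤ t → (x, t) ∈ F.dom := fun t ht => by
    obtain ⟨s, hs, hts⟩ := not_bddAbove_iff.mp hunb t
    exact (F.interval x hxD).out (F.zero_mem x hxD) hs ⟨ht, hts.le⟩
  have hA := F.isOpen_basin hf hx₀
  have hfA := hf.isOpen_image_s13 hA fun _ hy => hy.1
  obtain ⟨t, hft, ht⟩ := (((tendsto_add_exp_neg_smul_sub (f x₀) (f x)).eventually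
    (hfA.mem_nhds (mem_image_of_mem f (F.mem_basin_self hx₀)))).and
    (eventually_ge_atTop 0)).exists
  have hfront := hf.image_frontier_inter_subset hA (fun _ hy => hy.1) (F.injOn_basin hf hx₀)
    (mem_image_of_mem f ⟨F.flow_mem_frontier_basin hx (hdom t ht), F.mem_of_dom _ (hdom t ht)⟩)
  rw [hfA.frontier_eq, F.map_flow (hdom t ht)] at hfront
  exact hfront.2 hft

end AuxFlow

theorem boundary_basin_finite_life_general {X Y : Type*}
    [NormedAddCommGroup X] [NormedSpace ℝ X]
    [NormedAddCommGroup Y] [NormedSpace ℝ Y]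
    (D : Set X)
    (f : X → Y) (hf : IsLocalHomeoOn f D) (x₀ : X) (hx₀ : x₀ ∈ D)
    (F : AuxFlow D f x₀) :
    (f '' (frontier F.basin ∩ D) ⊆ frontier (f '' F.basin)) ∧
    (∀ x ∈ F.basin, ∀ t : ℝ, (x, t) ∈ F.dom → F.flow x t ∈ F.basin) ∧
    (∀ x ∈ frontier F.basin ∩ D, ∀ t : ℝ, (x, t) ∈ F.dom →
      F.flow x t ∈ frontier F.basin ∩ D) ∧
    ∀ x ∈ frontier F.basin ∩ D, BddAbove {t : ℝ | (x, t) ∈ F.dom} :=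
  ⟨hf.image_frontier_inter_subset (F.isOpen_basin hf hx₀) (fun _ hx => hx.1)
      (F.injOn_basin hf hx₀),
    fun _ hx _ ht => F.flow_mem_basin hx ht,
    fun _ hx _ ht => ⟨F.flow_mem_frontier_basin hx.1 ht, F.mem_of_dom _ ht⟩,
    fun _ hx => F.bddAbove_dom_of_mem_frontier_basin hf hx₀ hx.1 hx.2⟩

/-- On the boundary of the attraction basin (taken in `D`) the trajectories have finite
life: `f(∂𝒜) ⊆ ∂f(𝒜)`, both `𝒜` and `∂𝒜` are invariant under the flow, and forward
trajectories through boundary points are not global in the future. -/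
theorem boundary_basin_finite_life {X Y : Type*}
    [NormedAddCommGroup X] [NormedSpace ℝ X] [CompleteSpace X]
    [NormedAddCommGroup Y] [NormedSpace ℝ Y] [CompleteSpace Y]
    (D : Set X) (hDopen : IsOpen D) (hDne : D.Nonempty) (hDconn : IsConnected D)
    (f : X → Y) (hf : IsLocalHomeoOn f D) (x₀ : X) (hx₀ : x₀ ∈ D)
    (F : AuxFlow D f x₀) :
    (f '' (frontier F.basin ∩ D) ⊆ frontier (f '' F.basin)) ∧
    (∀ x ∈ F.basin, ∀ t : ℝ, (x, t) ∈ F.dom → F.flow x t ∈ F.basin) ∧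
    (∀ x ∈ frontier F.basin ∩ D, ∀ t : ℝ, (x, t) ∈ F.dom →
      F.flow x t ∈ frontier F.basin ∩ D) ∧
    ∀ x ∈ frontier F.basin ∩ D, BddAbove {t : ℝ | (x, t) ∈ F.dom} :=
  boundary_basin_finite_life_general D f hf x₀ hx₀ F
end

section
/- Let X and Y be Banach spaces, D ⊆ X a nonempty open connected set, x₀ ∈ D, and let f : D → Y be a C¹ map such that f'(x) is a continuous linear isomorphism of X onto Y for every x ∈ D. Assume that for every set B ⊆ D which is bounded in D one has sup_{x ∈ B} ‖f'(x)⁻¹‖ < +∞. Then for every closed set B bounded in D and every x ∈ B, each connected component of f⁻¹([f(x₀); f(x)]) ∩ B is compact, where [f(x₀); f(x)] denotes the line segment in Y from f(x₀) to f(x). -/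
/-!
Near each point of `D`, `f` is a diffeomorphism, so the segment `s ↦ f x₀ + s • (f x - f x₀)`
can be lifted through `f`, and lifts over an interval are unique. Because the component `K`
is connected, any two points `p, q ∈ K` are joined by a lift over the parameter interval
between them, and this lift stays in `K`, since the parameters of points of `K` form an
interval. The lift has velocity `f'(γ)⁻¹ (f x - f x₀)`, of norm at most `C ‖f x - f x₀‖`
when `C` bounds `‖f'⁻¹‖` on `B`, so `dist p q ≤ C ‖f x - f x₀‖ |t p - t q|`, where `t` is the
segment parameter. A closed set in a complete space whose distances are controlled by a
bounded real function in this way is compact.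
-/

open Set Metric Filter Topology

theorem IsClosed.connectedComponentIn {α : Type*} [TopologicalSpace α] {F : Set α}
    (hF : IsClosed F) (x : α) : IsClosed (connectedComponentIn F x) := by
  by_cases hx : x ∈ F
  · exact isClosed_of_closure_subset <|
      isPreconnected_connectedComponentIn.closure.subset_connectedComponentIn
        (subset_closure (mem_connectedComponentIn hx))
        (hF.closure_subset_iff.mpr (connectedComponentIn_subset F x))
  · rw [connectedComponentIn_eq_empty hx]
    exact isClosed_empty

theorem isCompact_of_dist_le_mul_dist {X : Type*} [MetricSpace X] [CompleteSpace X] {K : Set X}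
    (hK : IsClosed K) {θ : X → ℝ} (hθ : Bornology.IsBounded (θ '' K)) {L : ℝ}
    (hL : ∀ p ∈ K, ∀ q ∈ K, dist p q ≤ L * dist (θ p) (θ q)) : IsCompact K := by
  refine IsSeqCompact.isCompact fun u hu => ?_
  obtain ⟨a, -, φ, hφ, hθu⟩ := tendsto_subseq_of_bounded hθ fun n => mem_image_of_mem θ (hu n)
  have hcauchy : CauchySeq (u ∘ φ) := by
    refine Metric.cauchySeq_iff.2 fun ε hε => ?_
    obtain ⟨N, hN⟩ := Metric.cauchySeq_iff.1 hθu.cauchySeq (ε / (|L| + 1)) (by positivity)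
    refine ⟨N, fun m hm n hn => ?_⟩
    calc dist (u (φ m)) (u (φ n)) ≤ |L| * dist (θ (u (φ m))) (θ (u (φ n))) :=
          (hL _ (hu _) _ (hu _)).trans (by gcongr; exact le_abs_self L)
      _ ≤ |L| * (ε / (|L| + 1)) := by gcongr; exact (hN m hm n hn).le
      _ < ε := by rw [mul_div_assoc', div_lt_iff₀ (by positivity)]; nlinarith
  obtain ⟨q, hq⟩ := cauchySeq_tendsto_of_complete hcauchy
  exact ⟨q, hK.mem_of_tendsto hq (Eventually.of_forall fun n => hu (φ n)), φ, hφ, hq⟩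

section Lifting

variable {X Y : Type*} [TopologicalSpace X] {f : X → Y} {D : Set X} {c : ℝ → Y}
  {γ γ₁ γ₂ : ℝ → X} {A : Set ℝ}

structure IsLiftOn_s14 (f : X → Y) (D : Set X) (c : ℝ → Y) (γ : ℝ → X) (A : Set ℝ) : Prop where
  continuousOn : ContinuousOn γ A
  mapsTo : MapsTo γ A D
  comp_eq : ∀ s ∈ A, f (γ s) = c s

theorem IsLiftOn_s14.mono (h : IsLiftOn_s14 f D c γ A) {A' : Set ℝ} (hA : A' ⊆ A) :
    IsLiftOn_s14 f D c γ A' :=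
  ⟨h.continuousOn.mono hA, h.mapsTo.mono_left hA, fun s hs => h.comp_eq s (hA hs)⟩

theorem IsLiftOn_s14.congr (h : IsLiftOn_s14 f D c γ₁ A) (he : EqOn γ₁ γ₂ A) : IsLiftOn_s14 f D c γ₂ A :=
  ⟨h.continuousOn.congr he.symm, fun _ hs => he hs ▸ h.mapsTo hs,
    fun s hs => he hs ▸ h.comp_eq s hs⟩

variable [TopologicalSpace Y]

theorem IsLiftOn_s14.eqOn [T2Space X] (hf : IsLocalHomeomorphOn f D) (h₁ : IsLiftOn_s14 f D c γ₁ A)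
    (h₂ : IsLiftOn_s14 f D c γ₂ A) (hA : IsPreconnected A) {s₀ : ℝ} (hs₀ : s₀ ∈ A)
    (heq : γ₁ s₀ = γ₂ s₀) : EqOn γ₁ γ₂ A := by
  intro s hs
  refine (hA.induction₂ (fun s s' => γ₁ s = γ₂ s ↔ γ₁ s' = γ₂ s') (fun s hs => ?_)
    (fun _ _ _ _ _ _ h h' => h.trans h') (fun _ _ _ _ h => h.symm) hs₀ hs).1 heq
  have hγ₁ := h₁.continuousOn s hs
  have hγ₂ := h₂.continuousOn s hs
  by_cases h : γ₁ s = γ₂ s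
  · obtain ⟨e, hse, rfl⟩ := hf (γ₁ s) (h₁.mapsTo hs)
    have hU : e.source ∈ 𝓝 (γ₁ s) := e.open_source.mem_nhds hse
    filter_upwards [hγ₁ hU, hγ₂ (h ▸ hU), self_mem_nhdsWithin] with s' h1 h2 hs'
    exact iff_of_true h (e.injOn h1 h2 ((h₁.comp_eq s' hs').trans (h₂.comp_eq s' hs').symm))
  · filter_upwards [(hγ₁.prodMk_nhds hγ₂).eventually (isClosed_diagonal.isOpen_compl.mem_nhds h)]
      with s' hs'
    exact iff_of_false h hs'

theorem IsLiftOn_s14.concat [T2Space X] (hf : IsLocalHomeomorphOn f D) {a b d : ℝ}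
    (h₁ : IsLiftOn_s14 f D c γ₁ (uIcc a b)) (h₂ : IsLiftOn_s14 f D c γ₂ (uIcc b d)) (hb : γ₁ b = γ₂ b) :
    ∃ γ, IsLiftOn_s14 f D c γ (uIcc a d) ∧ γ a = γ₁ a ∧ γ d = γ₂ d := by
  classical
  have hoverlap : EqOn γ₁ γ₂ (uIcc a b ∩ uIcc b d) :=
    (h₁.mono inter_subset_left).eqOn hf (h₂.mono inter_subset_right)
      (ordConnected_uIcc.inter ordConnected_uIcc).isPreconnected
      ⟨right_mem_uIcc, left_mem_uIcc⟩ hb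
  set γ := (uIcc a b).piecewise γ₁ γ₂
  have e₁ : EqOn γ₁ γ (uIcc a b) := (piecewise_eqOn _ _ _).symm
  have e₂ : EqOn γ₂ γ (uIcc b d) := fun s hs => by
    by_cases h : s ∈ uIcc a b
    · rw [← e₁ h]; exact (hoverlap ⟨h, hs⟩).symm
    · exact (piecewise_eq_of_notMem _ _ _ h).symm
  have l₁ := h₁.congr e₁
  have l₂ := h₂.congr e₂
  have hγ : IsLiftOn_s14 f D c γ (uIcc a b ∪ uIcc b d) :=
    ⟨l₁.continuousOn.union_of_isClosed l₂.continuousOn isClosed_Icc isClosed_Icc,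
      l₁.mapsTo.union l₂.mapsTo, fun s hs => hs.elim (l₁.comp_eq s) (l₂.comp_eq s)⟩
  exact ⟨γ, hγ.mono uIcc_subset_uIcc_union_uIcc, (e₁ left_mem_uIcc).symm,
    (e₂ right_mem_uIcc).symm⟩

theorem OpenPartialHomeomorph.eventually_exists_isLiftOn (e : OpenPartialHomeomorph X Y)
    (hc : Continuous c) {θ : X → ℝ} {s : Set X} {x : X} (hx : x ∈ e.source)
    (hθ : ContinuousWithinAt θ s x) (hxc : e x = c (θ x)) :
    ∀ᶠ y in 𝓝[s] x, e y = c (θ y) →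
      ∃ γ, IsLiftOn_s14 e e.source c γ (uIcc (θ x) (θ y)) ∧ γ (θ x) = x ∧ γ (θ y) = y := by
  obtain ⟨δ, hδ, hball⟩ := Metric.mem_nhds_iff.1 <| hc.continuousAt.preimage_mem_nhds <|
    e.open_target.mem_nhds (hxc ▸ e.map_source hx)
  filter_upwards [nhdsWithin_le_nhds (e.open_source.mem_nhds hx), hθ (ball_mem_nhds _ hδ)]
    with y hy hθy hyc
  have hsub : uIcc (θ x) (θ y) ⊆ c ⁻¹' e.target :=
    ((Real.ball_eq_Ioo (θ x) δ ▸ ordConnected_Ioo).uIcc_subset (mem_ball_self hδ) hθy).trans hball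
  refine ⟨e.symm ∘ c, ⟨e.continuousOn_symm.comp hc.continuousOn hsub,
    fun s hs => e.map_target (hsub hs), fun s hs => e.right_inv (hsub hs)⟩, ?_, ?_⟩
  · simp [← hxc, e.left_inv hx]
  · simp [← hyc, e.left_inv hy]

theorem IsLocalHomeomorphOn.eventually_exists_isLiftOn (hf : IsLocalHomeomorphOn f D)
    (hD : IsOpen D) (hc : Continuous c) {θ : X → ℝ} {s : Set X} {x : X} (hx : x ∈ D)
    (hθ : ContinuousWithinAt θ s x) (hxc : f x = c (θ x)) :
    ∀ᶠ y in 𝓝[s] x, f y = c (θ y) →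
      ∃ γ, IsLiftOn_s14 f D c γ (uIcc (θ x) (θ y)) ∧ γ (θ x) = x ∧ γ (θ y) = y := by
  obtain ⟨e, hxe, rfl⟩ := hf x hx
  filter_upwards [(e.restrOpen D hD).eventually_exists_isLiftOn hc ⟨hxe, hx⟩ hθ hxc]
    with y hy hyc
  obtain ⟨γ, hγ, hγx, hγy⟩ := hy hyc
  exact ⟨γ, ⟨hγ.continuousOn, fun s hs => (hγ.mapsTo hs).2, hγ.comp_eq⟩, hγx, hγy⟩

section Preconnected

variable [T2Space X] (hf : IsLocalHomeomorphOn f D) (hD : IsOpen D) (hc : Continuous c)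
  {K : Set X} (hK : IsPreconnected K) (hKD : K ⊆ D) {θ : X → ℝ} (hθ : ContinuousOn θ K)
  (hfθ : ∀ p ∈ K, f p = c (θ p))
include hf hD hc hK hKD hθ hfθ

theorem IsPreconnected.exists_isLiftOn {p q : X} (hp : p ∈ K) (hq : q ∈ K) :
    ∃ γ, IsLiftOn_s14 f D c γ (uIcc (θ p) (θ q)) ∧ γ (θ p) = p ∧ γ (θ q) = q := by
  refine hK.induction₂
    (fun p q => ∃ γ, IsLiftOn_s14 f D c γ (uIcc (θ p) (θ q)) ∧ γ (θ p) = p ∧ γ (θ q) = q)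
    (fun x hx => ?_) (fun x y z _ _ _ ⟨γ₁, h₁, h₁x, h₁y⟩ ⟨γ₂, h₂, h₂y, h₂z⟩ => ?_)
    (fun x y _ _ ⟨γ, h, hx, hy⟩ => ⟨γ, uIcc_comm (θ x) (θ y) ▸ h, hy, hx⟩) hp hq
  · filter_upwards [hf.eventually_exists_isLiftOn hD hc (hKD hx) (hθ x hx) (hfθ x hx),
      self_mem_nhdsWithin] with y hy hyK using hy (hfθ y hyK)
  · obtain ⟨γ, hγ, hγx, hγz⟩ := h₁.concat hf h₂ (h₁y.trans h₂y.symm)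
    exact ⟨γ, hγ, hγx.trans h₁x, hγz.trans h₂z⟩

/-- The lift joining two points of `K` does not leave `K`: every intermediate parameter is
`θ r` for some `r ∈ K`, and the lift reaching `r` agrees with it there. -/
theorem IsPreconnected.exists_isLiftOn_self {p q : X} (hp : p ∈ K) (hq : q ∈ K) :
    ∃ γ, IsLiftOn_s14 f K c γ (uIcc (θ p) (θ q)) ∧ γ (θ p) = p ∧ γ (θ q) = q := by
  obtain ⟨γ, hγ, hγp, hγq⟩ := hK.exists_isLiftOn hf hD hc hKD hθ hfθ hp hq
  refine ⟨γ, ⟨hγ.continuousOn, fun s hs => ?_, hγ.comp_eq⟩, hγp, hγq⟩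
  obtain ⟨r, hr, rfl⟩ := (hK.image θ hθ).ordConnected.uIcc_subset
    (mem_image_of_mem θ hp) (mem_image_of_mem θ hq) hs
  obtain ⟨γ', hγ', hγ'p, hγ'r⟩ := hK.exists_isLiftOn hf hD hc hKD hθ hfθ hp hr
  have := (hγ.mono (uIcc_subset_uIcc_left hs)).eqOn hf hγ' isPreconnected_uIcc left_mem_uIcc
    (hγp.trans hγ'p.symm) right_mem_uIcc
  rwa [this, hγ'r]

end Preconnected

end Lifting

section Differentiable

variable {X Y : Type*} [NormedAddCommGroup X] [NormedSpace ℝ X] [CompleteSpace X]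
  [NormedAddCommGroup Y] [NormedSpace ℝ Y] {f : X → Y}

theorem isLocalHomeomorphOn_of_hasStrictFDerivAt {D : Set X} {f' : X → X ≃L[ℝ] Y}
    (hf : ∀ p ∈ D, HasStrictFDerivAt f (f' p : X →L[ℝ] Y) p) : IsLocalHomeomorphOn f D :=
  fun p hp =>
    ⟨(hf p hp).toOpenPartialHomeomorph f, (hf p hp).mem_toOpenPartialHomeomorph_source, rfl⟩

theorem HasStrictFDerivAt.hasDerivWithinAt_of_comp {e : X ≃L[ℝ] Y} {γ : ℝ → X} {A : Set ℝ}
    {s : ℝ} {v : Y} (hf : HasStrictFDerivAt f (e : X →L[ℝ] Y) (γ s))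
    (hγ : ContinuousWithinAt γ A s) (hfγ : HasDerivWithinAt (f ∘ γ) v A s) :
    HasDerivWithinAt γ (e.symm v) A s := by
  have hg := hf.to_localInverse.hasFDerivAt.comp_hasDerivWithinAt s hfγ
  refine hg.congr_of_eventuallyEq ?_ (hf.localInverse_apply_image).symm
  filter_upwards [hγ hf.eventually_left_inverse] with s' hs'
  exact hs'.symm

theorem IsLiftOn_s14.dist_le {D : Set X} {f' : X → X ≃L[ℝ] Y} {c : ℝ → Y} {γ : ℝ → X} {a b C : ℝ}
    {v : Y} (hf : ∀ p ∈ D, HasStrictFDerivAt f (f' p : X →L[ℝ] Y) p)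
    (hγ : IsLiftOn_s14 f D c γ (uIcc a b)) (hc : ∀ s, HasDerivAt c v s)
    (hC : ∀ s ∈ uIcc a b, ‖((f' (γ s)).symm : Y →L[ℝ] X)‖ ≤ C) :
    dist (γ a) (γ b) ≤ C * ‖v‖ * dist a b := by
  have hderiv : ∀ s ∈ uIcc a b, HasDerivWithinAt γ ((f' (γ s)).symm v) (uIcc a b) s :=
    fun s hs => (hf _ (hγ.mapsTo hs)).hasDerivWithinAt_of_comp (hγ.continuousOn s hs)
      ((hc s).hasDerivWithinAt.congr (fun s' hs' => hγ.comp_eq s' hs') (hγ.comp_eq s hs))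
  have hbound : ∀ s ∈ uIcc a b, ‖(f' (γ s)).symm v‖ ≤ C * ‖v‖ := fun s hs =>
    ((f' (γ s)).symm : Y →L[ℝ] X).le_opNorm v |>.trans (by gcongr; exact hC s hs)
  simpa only [dist_eq_norm] using
    (convex_uIcc a b).norm_image_sub_le_of_norm_hasDerivWithin_le hderiv hbound
      right_mem_uIcc left_mem_uIcc

end Differentiable

theorem exists_continuous_lineMap_inverse_on_segment {Y : Type*} [NormedAddCommGroup Y]
    [NormedSpace ℝ Y] (a b : Y) :
    ∃ t : Y → ℝ, Continuous t ∧
      ∀ y ∈ segment ℝ a b, AffineMap.lineMap a b (t y) = y ∧ t y ∈ Icc (0 : ℝ) 1 := by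
  rcases eq_or_ne a b with rfl | hab
  · exact ⟨0, continuous_const, fun y hy => by simp_all⟩
  have hv : ‖b - a‖ ≠ 0 := norm_ne_zero_iff.2 (sub_ne_zero.2 hab.symm)
  obtain ⟨ψ, -, hψ⟩ := exists_dual_vector ℝ (b - a) hv
  refine ⟨fun y => ψ (y - a) / ‖b - a‖, by fun_prop, ?_⟩
  rw [segment_eq_image_lineMap]
  rintro - ⟨s, hs, rfl⟩
  have : ψ (AffineMap.lineMap a b s - a) / ‖b - a‖ = s := by
    rw [← vsub_eq_sub, AffineMap.lineMap_vsub_left, map_smul, vsub_eq_sub, hψ, smul_eq_mul,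
      RCLike.ofReal_real_eq_id, id, mul_div_assoc, div_self hv, mul_one]
  simp only [this, hs, and_true]

theorem components_compact_of_bounded_inverse_general {X Y : Type*}
    [NormedAddCommGroup X] [NormedSpace ℝ X] [CompleteSpace X]
    [NormedAddCommGroup Y] [NormedSpace ℝ Y]
    (D : Set X) (hDopen : IsOpen D)
    (x₀ : X)
    (f : X → Y) (f' : X → (X ≃L[ℝ] Y))
    (hdf : ∀ x ∈ D, HasFDerivAt f (f' x : X →L[ℝ] Y) x)
    (hC1 : ContinuousOn (fun x : X => ((f' x : X →L[ℝ] Y))) D)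
    (hbdd : ∀ B : Set X, Bornology.IsBounded B → closure B ⊆ D →
      ∃ C : ℝ, ∀ x ∈ B, ‖((f' x).symm : Y →L[ℝ] X)‖ ≤ C) :
    ∀ B : Set X, IsClosed B → Bornology.IsBounded B → B ⊆ D →
      ∀ x ∈ B, ∀ z ∈ f ⁻¹' segment ℝ (f x₀) (f x) ∩ B,
        IsCompact (connectedComponentIn (f ⁻¹' segment ℝ (f x₀) (f x) ∩ B) z) := by
  intro B hBcl hBbd hBD x _ z _
  have hf : ∀ p ∈ D, HasStrictFDerivAt f (f' p : X →L[ℝ] Y) p := fun p hp =>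
    hasStrictFDerivAt_of_hasFDerivAt_of_continuousAt
      (eventually_of_mem (hDopen.mem_nhds hp) hdf) (hC1.continuousAt (hDopen.mem_nhds hp))
  have hfc : ContinuousOn f D := fun p hp => (hdf p hp).continuousAt.continuousWithinAt
  obtain ⟨C, hC⟩ := hbdd B hBbd (hBcl.closure_eq.symm ▸ hBD)
  obtain ⟨t, ht, htseg⟩ := exists_continuous_lineMap_inverse_on_segment (f x₀) (f x)
  set S := f ⁻¹' segment ℝ (f x₀) (f x) ∩ B
  set K := connectedComponentIn S z
  have hKS : K ⊆ S := connectedComponentIn_subset S z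
  have hKD : K ⊆ D := fun p hp => hBD (hKS hp).2
  have hseg : IsClosed (segment ℝ (f x₀) (f x)) := by
    rw [segment_eq_image_lineMap]
    exact (isCompact_Icc.image AffineMap.lineMap_continuous).isClosed
  have hSclosed : IsClosed S := by
    simpa only [S, inter_comm B] using (hfc.mono hBD).preimage_isClosed_of_isClosed hBcl hseg
  refine isCompact_of_dist_le_mul_dist (hSclosed.connectedComponentIn z) (θ := t ∘ f)
    (L := C * ‖f x - f x₀‖) ((isBounded_Icc (0 : ℝ) 1).subset ?_) fun p hp q hq => ?_
  · rintro - ⟨p, hp, rfl⟩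
    exact (htseg _ (hKS hp).1).2
  obtain ⟨γ, hγ, hγp, hγq⟩ := isPreconnected_connectedComponentIn.exists_isLiftOn_self
    (isLocalHomeomorphOn_of_hasStrictFDerivAt hf) hDopen AffineMap.lineMap_continuous hKD
    (ht.comp_continuousOn (hfc.mono hKD)) (fun p hp => (htseg _ (hKS hp).1).1.symm) hp hq
  have hdist := hγ.dist_le (fun p hp => hf p (hKD hp)) (fun _ => AffineMap.hasDerivAt_lineMap)
    fun s hs => hC _ (hKS (hγ.mapsTo hs)).2
  rwa [hγp, hγq] at hdist

/-- Lemma 2.3, (a-2) ⟹ (b): if `f : D → Y` is `C¹` with everywhere invertible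
derivative and `sup_{x ∈ B} ‖f'(x)⁻¹‖ < ∞` on every set `B` bounded in `D`, then for
every closed set `B` bounded in `D` and every `x ∈ B`, each connected component of
`f⁻¹([f(x₀);f(x)]) ∩ B` is compact. -/
theorem components_compact_of_bounded_inverse {X Y : Type*}
    [NormedAddCommGroup X] [NormedSpace ℝ X] [CompleteSpace X]
    [NormedAddCommGroup Y] [NormedSpace ℝ Y] [CompleteSpace Y]
    (D : Set X) (hDopen : IsOpen D) (hDne : D.Nonempty) (hDconn : IsConnected D)
    (x₀ : X) (hx₀ : x₀ ∈ D)
    (f : X → Y) (f' : X → (X ≃L[ℝ] Y))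
    (hdf : ∀ x ∈ D, HasFDerivAt f (f' x : X →L[ℝ] Y) x)
    (hC1 : ContinuousOn (fun x : X => ((f' x : X →L[ℝ] Y))) D)
    (hbdd : ∀ B : Set X, Bornology.IsBounded B → closure B ⊆ D →
      ∃ C : ℝ, ∀ x ∈ B, ‖((f' x).symm : Y →L[ℝ] X)‖ ≤ C) :
    ∀ B : Set X, IsClosed B → Bornology.IsBounded B → B ⊆ D →
      ∀ x ∈ B, ∀ z ∈ f ⁻¹' segment ℝ (f x₀) (f x) ∩ B,
        IsCompact (connectedComponentIn (f ⁻¹' segment ℝ (f x₀) (f x) ∩ B) z) :=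
  components_compact_of_bounded_inverse_general D hDopen x₀ f f' hdf hC1 hbdd
end

section
/- Let X and Y be Banach spaces, D ⊆ X a nonempty open connected set, f : D → Y a local homeomorphism, x₀ ∈ D, and let (D_Φ, Φ) be the maximal auxiliary flow for f at x₀. Assume condition (b): for every closed set B bounded in D and every x ∈ B, each connected component of f⁻¹([f(x₀); f(x)]) ∩ B is compact, where [f(x₀); f(x)] is the segment in Y from f(x₀) to f(x). Then condition (c) holds: for every closed set B bounded in D and every x ∈ B, if Φ(x,t) ∈ B for all t ≥ 0 with (x,t) ∈ D_Φ, then [0,∞) ⊆ I_x, i.e. the trajectory through x is global in the future. -/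
/-!
Suppose the trajectory through `x` stays in `B` but leaves the flow domain at some future time,
and let `T > 0` be the first such time. On `[0, T)` the trajectory is a connected subset of
`f⁻¹([f(x₀); f(x)]) ∩ B` containing `x`, hence lies in the connected component of `x`, which is
compact by (b). The trajectory therefore has a cluster point `z ∈ D` as `t → T⁻`, and
`f(z) = f(x₀) + e^{-T}(f(x) - f(x₀))`. Inverting `f` near `z` continues the trajectory as a lifting
of the curve `t ↦ f(x₀) + e^{-t}(f(x) - f(x₀))` up to and including time `T`, so by maximality of
the flow `T` lies in the flow domain after all.
-/

open Set Filter

open Topology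

theorem exists_pos_Ico_subset_and_notMem {I : Set ℝ} (hI : IsOpen I) (h0 : (0 : ℝ) ∈ I)
    {t₀ : ℝ} (ht₀ : 0 ≤ t₀) (ht₀I : t₀ ∉ I) : ∃ T, 0 < T ∧ Ico 0 T ⊆ I ∧ T ∉ I := by
  set S := Ici (0 : ℝ) ∩ Iᶜ
  have hbdd : BddBelow S := ⟨0, fun _ hs => hs.1⟩
  have hT : sInf S ∈ S := (isClosed_Ici.inter hI.isClosed_compl).csInf_mem ⟨t₀, ht₀, ht₀I⟩ hbdd
  refine ⟨sInf S, hT.1.lt_of_ne ?_, fun s hs => ?_, hT.2⟩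
  · intro h
    exact hT.2 (h ▸ h0)
  · by_contra h
    exact (csInf_le hbdd ⟨hs.1, h⟩).not_gt hs.2

namespace IsLocalHomeoOn

variable {X Y : Type*} [TopologicalSpace X] [TopologicalSpace Y] [T2Space Y]
  {f : X → Y} {D : Set X} {c : ℝ → Y} {γ : ℝ → X} {a T : ℝ}

theorem exists_lift_Icc_of_mapClusterPt (hf : IsLocalHomeoOn f D) (hc : Continuous c)
    (haT : a < T) (hγ : ContinuousOn γ (Ico a T)) (hγD : ∀ t ∈ Ico a T, γ t ∈ D)
    (hfγ : ∀ t ∈ Ico a T, f (γ t) = c t) {z : X} (hz : z ∈ D)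
    (hzγ : MapClusterPt z (𝓝[<] T) γ) :
    ∃ ψ : ℝ → X, ContinuousOn ψ (Icc a T) ∧ ψ a = γ a ∧
      ∀ t ∈ Icc a T, ψ t ∈ D ∧ f (ψ t) = c t := by
  obtain ⟨U, hUD, hU, hzU, hfU, hfcont, g, hg, hgf, hfg⟩ := hf z hz
  have hfz : f z = c T := by
    have hfγc : MapClusterPt (f z) (𝓝[<] T) c :=
      (hzγ.continuousAt_comp (hfcont.continuousAt (hU.mem_nhds hzU))).congrFun
        (eventually_of_mem (Ioo_mem_nhdsLT haT) fun t ht => hfγ t (Ioo_subset_Ico_self ht))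
    exact eq_of_nhds_neBot
      (hfγc.neBot.mono (inf_le_inf_left _ ((hc.tendsto T).mono_left nhdsWithin_le_nhds)))
  obtain ⟨ε, hε, hcU⟩ := Metric.eventually_nhds_iff.1
    (hc.continuousAt.preimage_mem_nhds (hfU.mem_nhds ⟨z, hzU, hfz⟩))
  -- glue `γ` to the local inverse of `c` at a time `t₁` near `T` where `γ` is back in the chart `U`
  obtain ⟨t₁, hγt₁ : γ t₁ ∈ U, ht₁ : max a (T - ε) < t₁ ∧ t₁ < T⟩ :=
    ((hzγ.frequently (hU.mem_nhds hzU)).and_eventually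
      (Ioo_mem_nhdsLT (max_lt haT (sub_lt_self T hε)))).exists
  rw [max_lt_iff] at ht₁
  obtain ⟨⟨hat₁, hεt₁⟩, ht₁T⟩ := ht₁
  have hIcc : Icc a t₁ ⊆ Ico a T := Icc_subset_Ico_right ht₁T
  have hcU' : ∀ t ∈ Icc t₁ T, c t ∈ f '' U := fun t ht =>
    hcU (by rw [Real.dist_eq, abs_lt]; constructor <;> linarith [ht.1, ht.2])
  have hjunction : g (c t₁) = γ t₁ := by rw [← hfγ t₁ ⟨hat₁.le, ht₁T⟩, hgf _ hγt₁]
  set ψ : ℝ → X := fun t => if t ≤ t₁ then γ t else g (c t)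
  have hψγ : EqOn ψ γ (Icc a t₁) := fun t ht => if_pos ht.2
  have hψgc : EqOn ψ (g ∘ c) (Icc t₁ T) := by
    intro t ht
    rcases ht.1.eq_or_lt with rfl | h
    · exact (if_pos le_rfl).trans hjunction.symm
    · exact if_neg h.not_ge
  refine ⟨ψ, ?_, hψγ ⟨le_rfl, hat₁.le⟩, fun t ht => ?_⟩
  · rw [← Icc_union_Icc_eq_Icc hat₁.le ht₁T.le]
    exact ((hγ.mono hIcc).congr hψγ).union_of_isClosed
      ((hg.comp hc.continuousOn hcU').congr hψgc) isClosed_Icc isClosed_Icc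
  · rcases le_total t t₁ with h | h
    · rw [hψγ ⟨ht.1, h⟩]
      exact ⟨hγD t (hIcc ⟨ht.1, h⟩), hfγ t (hIcc ⟨ht.1, h⟩)⟩
    · rw [hψgc ⟨h, ht.2⟩]
      obtain ⟨hgU, hfg⟩ := hfg _ (hcU' t ⟨h, ht.2⟩)
      exact ⟨hUD hgU, hfg⟩

theorem exists_lift_Icc_of_mapsTo_isCompact (hf : IsLocalHomeoOn f D) (hc : Continuous c)
    (haT : a < T) (hγ : ContinuousOn γ (Ico a T)) (hfγ : ∀ t ∈ Ico a T, f (γ t) = c t)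
    {K : Set X} (hK : IsCompact K) (hKD : K ⊆ D) (hγK : MapsTo γ (Ico a T) K) :
    ∃ ψ : ℝ → X, ContinuousOn ψ (Icc a T) ∧ ψ a = γ a ∧
      ∀ t ∈ Icc a T, ψ t ∈ D ∧ f (ψ t) = c t := by
  obtain ⟨z, hzK, hzγ⟩ := hK.exists_mapClusterPt (f := 𝓝[<] T) (u := γ) <|
    le_principal_iff.2 <| mem_map.2 <|
      mem_of_superset (Ioo_mem_nhdsLT haT) fun t ht => hγK (Ioo_subset_Ico_self ht)
  exact hf.exists_lift_Icc_of_mapClusterPt hc haT hγ (fun t ht => hKD (hγK ht)) hfγ (hKD hzK) hzγ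

end IsLocalHomeoOn

namespace AuxFlow

variable {X Y : Type*} [NormedAddCommGroup X] [NormedSpace ℝ X]
  [NormedAddCommGroup Y] [NormedSpace ℝ Y] {D : Set X} {f : X → Y} {x₀ : X}
  (F : AuxFlow D f x₀)

theorem isOpen_setOf_mem_dom (x : X) : IsOpen {t : ℝ | (x, t) ∈ F.dom} :=
  F.isOpen_dom.preimage (Continuous.prodMk_right x)

theorem continuousOn_flow_s15 (x : X) : ContinuousOn (F.flow x) {t : ℝ | (x, t) ∈ F.dom} :=
  F.continuousOn.comp (Continuous.prodMk_right x).continuousOn fun _ ht => ht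

theorem apply_flow_mem_segment {x : X} {t : ℝ} (ht : 0 ≤ t) (hxt : (x, t) ∈ F.dom) :
    f (F.flow x t) ∈ segment ℝ (f x₀) (f x) := by
  rw [F.lifts (x, t) hxt, segment_eq_image']
  exact ⟨Real.exp (-t), ⟨(Real.exp_pos _).le, Real.exp_le_one_iff.2 (neg_nonpos.2 ht)⟩, rfl⟩

theorem mapsTo_connectedComponentIn {x : X} (hxD : x ∈ D) {B : Set X} {T : ℝ}
    (hT : Ico 0 T ⊆ {t : ℝ | (x, t) ∈ F.dom}) (hB : MapsTo (F.flow x) (Ico 0 T) B) :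
    MapsTo (F.flow x) (Ico 0 T)
      (connectedComponentIn (f ⁻¹' segment ℝ (f x₀) (f x) ∩ B) x) := by
  intro t ht
  refine (isPreconnected_Ico.image _ ((F.continuousOn_flow_s15 x).mono hT)).subset_connectedComponentIn
    ⟨0, ⟨le_rfl, ht.1.trans_lt ht.2⟩, F.flow_zero x hxD⟩ ?_ (mem_image_of_mem _ ht)
  rintro _ ⟨s, hs, rfl⟩
  exact ⟨F.apply_flow_mem_segment hs.1 (hT hs), hB hs⟩

end AuxFlow

theorem trapped_trajectories_global_general {X Y : Type*}
    [NormedAddCommGroup X] [NormedSpace ℝ X]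
    [NormedAddCommGroup Y] [NormedSpace ℝ Y]
    (D : Set X)
    (f : X → Y) (hf : IsLocalHomeoOn f D) (x₀ : X)
    (F : AuxFlow D f x₀)
    (hb : ∀ B : Set X, IsClosed B → Bornology.IsBounded B → B ⊆ D →
      ∀ x ∈ B, ∀ z ∈ f ⁻¹' segment ℝ (f x₀) (f x) ∩ B,
        IsCompact (connectedComponentIn (f ⁻¹' segment ℝ (f x₀) (f x) ∩ B) z)) :
    ∀ B : Set X, IsClosed B → Bornology.IsBounded B → B ⊆ D →
      ∀ x ∈ B, (∀ t : ℝ, 0 ≤ t → (x, t) ∈ F.dom → F.flow x t ∈ B) →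
        ∀ t : ℝ, 0 ≤ t → (x, t) ∈ F.dom := by
  intro B hB hBbdd hBD x hxB htraj t₀ ht₀
  by_contra ht₀x
  have hxD : x ∈ D := hBD hxB
  obtain ⟨T, hT, hIco, hTx⟩ :=
    exists_pos_Ico_subset_and_notMem (F.isOpen_setOf_mem_dom x) (F.zero_mem x hxD) ht₀ ht₀x
  have hK := hb B hB hBbdd hBD x hxB x ⟨right_mem_segment ℝ _ _, hxB⟩
  obtain ⟨ψ, hψ, hψ0, hψlift⟩ := hf.exists_lift_Icc_of_mapsTo_isCompact
    (c := fun t => f x₀ + Real.exp (-t) • (f x - f x₀)) (by fun_prop) hT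
    ((F.continuousOn_flow_s15 x).mono hIco) (fun t ht => F.lifts _ (hIco ht)) hK
    ((connectedComponentIn_subset _ _).trans (inter_subset_right.trans hBD))
    (F.mapsTo_connectedComponentIn hxD hIco fun t ht => htraj t ht.1 (hIco ht))
  exact hTx (F.maximal x hxD (Icc 0 T) ordConnected_Icc ⟨le_rfl, hT.le⟩ ψ hψ
    (hψ0.trans (F.flow_zero x hxD)) hψlift T ⟨hT.le, le_rfl⟩).1

/-- Lemma 2.3, (b) ⟹ (c): if for every closed set `B` bounded in `D` and every `x ∈ B`
the connected components of `f⁻¹([f(x₀);f(x)]) ∩ B` are compact, then every trajectory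
of the auxiliary flow which stays in a closed bounded subset of `D` is global in the
future. -/
theorem trapped_trajectories_global {X Y : Type*}
    [NormedAddCommGroup X] [NormedSpace ℝ X] [CompleteSpace X]
    [NormedAddCommGroup Y] [NormedSpace ℝ Y] [CompleteSpace Y]
    (D : Set X) (hDopen : IsOpen D) (hDne : D.Nonempty) (hDconn : IsConnected D)
    (f : X → Y) (hf : IsLocalHomeoOn f D) (x₀ : X) (hx₀ : x₀ ∈ D)
    (F : AuxFlow D f x₀)
    (hb : ∀ B : Set X, IsClosed B → Bornology.IsBounded B → B ⊆ D →
      ∀ x ∈ B, ∀ z ∈ f ⁻¹' segment ℝ (f x₀) (f x) ∩ B,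
        IsCompact (connectedComponentIn (f ⁻¹' segment ℝ (f x₀) (f x) ∩ B) z)) :
    ∀ B : Set X, IsClosed B → Bornology.IsBounded B → B ⊆ D →
      ∀ x ∈ B, (∀ t : ℝ, 0 ≤ t → (x, t) ∈ F.dom → F.flow x t ∈ B) →
        ∀ t : ℝ, 0 ≤ t → (x, t) ∈ F.dom :=
  trapped_trajectories_global_general D f hf x₀ F hb
end
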